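/- arXiv:1312.7555 — 8 statements merged into one kernel-verified Lean document; each statement's English description precedes it below -/
import Mathlib

section
/- For every integer m ≥ 4, we have 1 + ⌊√(2(m - ⌊√(2m)⌋ - 2))⌋ ≤ ⌊√(2m)⌋. -/
/-!
Write `k = ⌊√(2m)⌋`. Then `2m < (k + 1)²`, so `2m ≤ k² + 2k` as both sides are integers, and hence
`2(m - k - 2) ≤ k² - 4 < k²`. Taking square roots, `⌊√(2(m - k - 2))⌋ < k`.
-/

theorem Real.lt_floor_sqrt_add_one_sq (x : ℝ) : x < ((⌊√x⌋ : ℝ) + 1) ^ 2 :=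
  Real.lt_sq_of_sqrt_lt (Int.lt_floor_add_one _)

theorem Int.le_floor_sqrt_sq_add_two_mul (n : ℤ) :
    n ≤ ⌊√(n : ℝ)⌋ ^ 2 + 2 * ⌊√(n : ℝ)⌋ := by
  have h : n < (⌊√(n : ℝ)⌋ + 1) ^ 2 := by exact_mod_cast Real.lt_floor_sqrt_add_one_sq n
  linarith

theorem Int.floor_sqrt_lt_of_lt_sq {y : ℝ} {k : ℤ} (hk : 0 < k) (hy : y < (k : ℝ) ^ 2) :
    ⌊√y⌋ < k :=
  Int.floor_lt.2 <| (Real.sqrt_lt' (by exact_mod_cast hk)).2 hy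

theorem stmt_0 (m : ℤ) (hm : 4 ≤ m) :
    1 + ⌊Real.sqrt (2 * ((m : ℝ) - ⌊Real.sqrt (2 * (m : ℝ))⌋ - 2))⌋ ≤
      ⌊Real.sqrt (2 * (m : ℝ))⌋ := by
  set k := ⌊√(2 * (m : ℝ))⌋
  have hk_pos : 0 < k := by
    have hmR : (4 : ℝ) ≤ m := by exact_mod_cast hm
    exact Int.floor_pos.2 (Real.one_le_sqrt.2 (by linarith))
  have h2m : 2 * m ≤ k ^ 2 + 2 * k := by
    simpa [k] using Int.le_floor_sqrt_sq_add_two_mul (2 * m)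
  have hlt : 2 * ((m : ℝ) - k - 2) < (k : ℝ) ^ 2 := by
    have : 2 * (m : ℝ) ≤ (k : ℝ) ^ 2 + 2 * k := by exact_mod_cast h2m
    linarith
  have := Int.floor_sqrt_lt_of_lt_sq hk_pos hlt
  omega
end

section
/- Let H be a k-uniform hypergraph with n vertices and m edges, where k ≥ 1. Then the transversal number τ(H) satisfies τ(H) ≤ (⌊k/2⌋·m + n)/⌊3k/2⌋. -/
/-!
Put `K = ⌊3k/2⌋`. For every family of nonempty edges of size at most `k` we show
`K τ ≤ potential K E = ∑ₑ (K - |e|) + |⋃ E|` by induction on `∑ₑ |e|`; for a `k`-uniform family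
the right side is at most `⌊k/2⌋ m + n`. A singleton edge `{x}`, a vertex `x` of degree at least 3,
or a vertex `x` in exactly two edges `e, f` with `|e ∪ f| ≤ K` may be put into the transversal:
deleting `x` lowers the right side by at least `K`. A vertex of degree 1 may be removed from its
edge. What remains is a family in which every vertex has degree 2 and intersecting edges have
`|e ∪ f| > K`, i.e. the dual of a multigraph. A maximum strongly independent set `M` (a maximum
matching of that multigraph) yields a transversal of size `m - |M|`, and the absence of augmenting
paths gives `|⋃ E| ≤ K |M|`, which is exactly what the inequality needs.
-/

open Finset

namespace ChvatalMcDiarmid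

variable {V : Type*} {x : V}

lemma ne_of_mem_of_disjoint {e g M : Finset V} (hxe : x ∈ e) (hxM : x ∈ M) (hgM : Disjoint g M) :
    e ≠ g := by
  rintro rfl
  exact disjoint_left.1 hgM hxe hxM

variable [DecidableEq V] {E : Finset (Finset V)} {T : Finset V} {K : ℕ}

def IsTransversal (E : Finset (Finset V)) (T : Finset V) : Prop :=
  ∀ e ∈ E, (e ∩ T).Nonempty

def potential (K : ℕ) (E : Finset (Finset V)) : ℕ :=
  ∑ e ∈ E, (K - #e) + #(E.biUnion id)

def HasSmallTransversal (K : ℕ) (E : Finset (Finset V)) : Prop :=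
  ∃ T, IsTransversal E T ∧ K * #T ≤ potential K E

lemma IsTransversal.mono (h : IsTransversal E T) {T' : Finset V} (hT : T ⊆ T') :
    IsTransversal E T' :=
  fun e he => (h e he).mono (inter_subset_inter_left hT)

lemma exists_isTransversal_card_le (E : Finset (Finset V)) (hE : ∀ e ∈ E, e.Nonempty) :
    ∃ T, IsTransversal E T ∧ #T ≤ #E := by
  induction E using Finset.induction_on with
  | empty => exact ⟨∅, by simp [IsTransversal], by simp⟩
  | insert e E he ih =>
    obtain ⟨T, hT, hcard⟩ := ih fun f hf => hE f (mem_insert_of_mem hf)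
    obtain ⟨v, hv⟩ := hE e (mem_insert_self e E)
    refine ⟨insert v T, fun f hf => ?_, ?_⟩
    · rcases mem_insert.1 hf with rfl | hf
      · exact ⟨v, mem_inter.2 ⟨hv, mem_insert_self v T⟩⟩
      · exact hT.mono (subset_insert v T) f hf
    · rw [card_insert_of_notMem he]
      exact (card_insert_le v T).trans (by omega)

lemma IsTransversal.insert_of_filter (h : IsTransversal {e ∈ E | x ∉ e} T) :
    IsTransversal E (insert x T) := by
  intro e he
  by_cases hxe : x ∈ e
  · exact ⟨x, mem_inter.2 ⟨hxe, mem_insert_self x T⟩⟩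
  · exact h.mono (subset_insert x T) e (mem_filter.2 ⟨he, hxe⟩)

lemma HasSmallTransversal.of_filter (h : HasSmallTransversal K {e ∈ E | x ∉ e})
    (hle : K + potential K {e ∈ E | x ∉ e} ≤ potential K E) : HasSmallTransversal K E := by
  obtain ⟨T, hT, hcard⟩ := h
  refine ⟨insert x T, hT.insert_of_filter, ?_⟩
  calc K * #(insert x T) ≤ K * #T + K := by
        rw [← mul_add_one]
        exact Nat.mul_le_mul_left K (card_insert_le x T)
    _ ≤ potential K E := by omega

lemma potential_filter_add_le (K : ℕ) (x : V) {S : Finset V} (hS : S ⊆ E.biUnion id)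
    (hSx : ∀ v ∈ S, ∀ e ∈ E, v ∈ e → x ∈ e) :
    potential K {e ∈ E | x ∉ e} + ∑ e ∈ E with x ∈ e, (K - #e) + #S ≤ potential K E := by
  have hsplit := sum_filter_add_sum_filter_not E (fun e => x ∈ e) (fun e => K - #e)
  have hdisj : Disjoint ({e ∈ E | x ∉ e}.biUnion id) S := by
    refine disjoint_left.2 fun v hv hvS => ?_
    obtain ⟨e, he, hve⟩ := mem_biUnion.1 hv
    exact (mem_filter.1 he).2 (hSx v hvS e (mem_filter.1 he).1 hve)
  have hsub := card_le_card <|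
    union_subset (biUnion_subset_biUnion_of_subset_left id (filter_subset (fun e => x ∉ e) E)) hS
  rw [card_union_of_disjoint hdisj] at hsub
  unfold potential
  omega

lemma add_potential_filter_le_of_singleton_mem (K : ℕ) (hx : {x} ∈ E) :
    K + potential K {e ∈ E | x ∉ e} ≤ potential K E := by
  have hpot := potential_filter_add_le K x (S := {x})
    (singleton_subset_iff.2 (mem_biUnion.2 ⟨{x}, hx, mem_singleton_self x⟩))
    (fun v hv _ _ hve => mem_singleton.1 hv ▸ hve)
  have hsingle : K - 1 ≤ ∑ e ∈ E with x ∈ e, (K - #e) := by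
    simpa using single_le_sum (f := fun e => K - #e) (fun _ _ => Nat.zero_le _)
      (mem_filter.2 ⟨hx, mem_singleton_self x⟩)
  rw [card_singleton] at hpot
  omega

lemma add_potential_filter_le_of_three_le_card (k : ℕ) (hk : ∀ e ∈ E, #e ≤ k)
    (hx : 3 ≤ #{e ∈ E | x ∈ e}) :
    k + k / 2 + potential (k + k / 2) {e ∈ E | x ∉ e} ≤ potential (k + k / 2) E := by
  obtain ⟨e, hex⟩ : {e ∈ E | x ∈ e}.Nonempty := card_pos.1 (by omega)
  have hpot := potential_filter_add_le (k + k / 2) x (S := {x})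
    (singleton_subset_iff.2 (mem_biUnion.2 ⟨e, (mem_filter.1 hex).1, (mem_filter.1 hex).2⟩))
    (fun v hv _ _ hve => mem_singleton.1 hv ▸ hve)
  have hsum : #{e ∈ E | x ∈ e} * (k / 2) ≤ ∑ e ∈ E with x ∈ e, (k + k / 2 - #e) := by
    rw [← smul_eq_mul]
    exact card_nsmul_le_sum _ _ _ fun e he => by have := hk e (mem_filter.1 he).1; omega
  have : 3 * (k / 2) ≤ #{e ∈ E | x ∈ e} * (k / 2) := Nat.mul_le_mul_right _ hx
  rw [card_singleton] at hpot
  omega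

lemma filter_mem_eq_pair {v : V} {e f : Finset V} (hv : #{g ∈ E | v ∈ g} = 2) (he : e ∈ E)
    (hf : f ∈ E) (hef : e ≠ f) (hve : v ∈ e) (hvf : v ∈ f) : {g ∈ E | v ∈ g} = {e, f} := by
  refine (eq_of_subset_of_card_le (fun g hg => ?_) (by rw [hv, card_pair hef])).symm
  rcases mem_insert.1 hg with rfl | hg
  · exact mem_filter.2 ⟨he, hve⟩
  · exact mem_singleton.1 hg ▸ mem_filter.2 ⟨hf, hvf⟩

lemma eq_or_eq_of_card_filter_mem_eq_two {v : V} {e f g : Finset V}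
    (hv : #{g ∈ E | v ∈ g} = 2) (he : e ∈ E) (hf : f ∈ E) (hef : e ≠ f) (hve : v ∈ e)
    (hvf : v ∈ f) (hg : g ∈ E) (hvg : v ∈ g) : g = e ∨ g = f := by
  have hmem : g ∈ {g ∈ E | v ∈ g} := mem_filter.2 ⟨hg, hvg⟩
  simpa [filter_mem_eq_pair hv he hf hef hve hvf] using hmem

lemma add_potential_filter_le_of_card_union_le {e f : Finset V} (he : e ∈ E) (hf : f ∈ E)
    (hef : e ≠ f) (hxe : x ∈ e) (hxf : x ∈ f) (hdeg : ∀ v ∈ e ∩ f, #{g ∈ E | v ∈ g} = 2)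
    (heK : #e ≤ K) (hfK : #f ≤ K) (hunion : #(e ∪ f) ≤ K) :
    K + potential K {g ∈ E | x ∉ g} ≤ potential K E := by
  have hx : x ∈ e ∩ f := mem_inter.2 ⟨hxe, hxf⟩
  have hpot := potential_filter_add_le K x (S := e ∩ f)
    (fun v hv => mem_biUnion.2 ⟨e, he, (mem_inter.1 hv).1⟩)
    (fun v hv g hg hvg => by
      obtain ⟨hve, hvf⟩ := mem_inter.1 hv
      rcases eq_or_eq_of_card_filter_mem_eq_two (hdeg v hv) he hf hef hve hvf hg hvg with rfl | rfl
      exacts [hxe, hxf])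
  rw [filter_mem_eq_pair (hdeg x hx) he hf hef hxe hxf, sum_pair hef] at hpot
  have := card_union_add_card_inter e f
  omega

lemma sum_insert_erase_add_le {α : Type*} [DecidableEq α] {s : Finset α} (f : α → ℕ) (a : α)
    {b : α} (hb : b ∈ s) : ∑ i ∈ insert a (s.erase b), f i + f b ≤ f a + ∑ i ∈ s, f i := by
  rw [← add_sum_erase s f hb]
  by_cases ha : a ∈ s.erase b
  · rw [insert_eq_of_mem ha]; omega
  · rw [sum_insert ha]; omega

lemma HasSmallTransversal.of_insert_erase {e₀ : Finset V} (he₀ : e₀ ∈ E)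
    (hx : {e ∈ E | x ∈ e} = {e₀}) (h : HasSmallTransversal K (insert (e₀.erase x) (E.erase e₀))) :
    HasSmallTransversal K E := by
  have hxe₀ : x ∈ e₀ := (mem_filter.1 (hx ▸ mem_singleton_self e₀ : e₀ ∈ {e ∈ E | x ∈ e})).2
  have honly : ∀ e ∈ E, x ∈ e → e = e₀ := fun e he hxe =>
    mem_singleton.1 (hx ▸ mem_filter.2 ⟨he, hxe⟩)
  obtain ⟨T, hT, hcard⟩ := h
  refine ⟨T, fun e he => ?_, hcard.trans ?_⟩
  · by_cases heq : e = e₀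
    · subst heq
      exact (hT _ (mem_insert_self _ _)).mono (inter_subset_inter_right (erase_subset x e))
    · exact hT e (mem_insert_of_mem (mem_erase.2 ⟨heq, he⟩))
  · have hsum := sum_insert_erase_add_le (fun e => K - #e) (e₀.erase x) he₀
    have hU : (insert (e₀.erase x) (E.erase e₀)).biUnion id ⊆ (E.biUnion id).erase x := by
      intro v hv
      obtain ⟨g, hg, hvg⟩ := mem_biUnion.1 hv
      rcases mem_insert.1 hg with rfl | hg
      · exact mem_erase.2 ⟨ne_of_mem_erase hvg, mem_biUnion.2 ⟨e₀, he₀, mem_of_mem_erase hvg⟩⟩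
      · obtain ⟨hne, hgE⟩ := mem_erase.1 hg
        exact mem_erase.2 ⟨fun hvx => hne (honly g hgE (hvx ▸ hvg)), mem_biUnion.2 ⟨g, hgE, hvg⟩⟩
    have hUcard := card_le_card hU
    rw [card_erase_of_mem (mem_biUnion.2 ⟨e₀, he₀, hxe₀⟩)] at hUcard
    have hU0 : 0 < #(E.biUnion id) := card_pos.2 ⟨x, mem_biUnion.2 ⟨e₀, he₀, hxe₀⟩⟩
    simp only [card_erase_of_mem hxe₀] at hsum
    unfold potential
    omega

def IsStronglyIndependent (E : Finset (Finset V)) (M : Finset V) : Prop :=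
  ∀ e ∈ E, #(e ∩ M) ≤ 1

structure IsMaximumStronglyIndependent (E : Finset (Finset V)) (M : Finset V) : Prop where
  subset_biUnion : M ⊆ E.biUnion id
  isStronglyIndependent : IsStronglyIndependent E M
  card_le : ∀ M' ⊆ E.biUnion id, IsStronglyIndependent E M' → #M' ≤ #M

lemma exists_isMaximumStronglyIndependent (E : Finset (Finset V)) :
    ∃ M, IsMaximumStronglyIndependent E M := by
  classical
  obtain ⟨M, hM, hmax⟩ := exists_max_image
    {M ∈ (E.biUnion id).powerset | IsStronglyIndependent E M} card
    ⟨∅, mem_filter.2 ⟨empty_mem_powerset _, fun e _ => by simp⟩⟩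
  rw [mem_filter, mem_powerset] at hM
  exact ⟨M, hM.1, hM.2, fun M' hM'U hM' => hmax M' (mem_filter.2 ⟨mem_powerset.2 hM'U, hM'⟩)⟩

variable {M : Finset V}

lemma IsStronglyIndependent.mono {M' : Finset V} (h : IsStronglyIndependent E M) (hM : M' ⊆ M) :
    IsStronglyIndependent E M' :=
  fun e he => (card_le_card (inter_subset_inter_left hM)).trans (h e he)

lemma IsStronglyIndependent.insert (h : IsStronglyIndependent E M) {y : V}
    (hy : ∀ e ∈ E, y ∈ e → Disjoint e M) : IsStronglyIndependent E (insert y M) := by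
  intro e he
  by_cases hye : y ∈ e
  · rw [inter_insert_of_mem hye, disjoint_iff_inter_eq_empty.1 (hy e he hye)]
    simp
  · rw [inter_insert_of_notMem hye]
    exact h e he

lemma IsStronglyIndependent.disjoint_erase (h : IsStronglyIndependent E M) {e : Finset V}
    (he : e ∈ E) (hxe : x ∈ e) (hxM : x ∈ M) : Disjoint e (M.erase x) := by
  refine disjoint_left.2 fun u hue huM => ?_
  obtain ⟨hux, huM⟩ := mem_erase.1 huM
  exact hux (card_le_one.1 (h e he) u (mem_inter.2 ⟨hue, huM⟩) x (mem_inter.2 ⟨hxe, hxM⟩))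

lemma IsStronglyIndependent.sum_filter_not_disjoint (h : IsStronglyIndependent E M)
    (F : Finset V → ℕ) :
    ∑ e ∈ E with ¬Disjoint e M, F e = ∑ x ∈ M, ∑ e ∈ E with x ∈ e, F e := by
  have hC : {e ∈ E | ¬Disjoint e M} = M.biUnion fun x => {e ∈ E | x ∈ e} := by
    ext e
    simp only [mem_filter, mem_biUnion, not_disjoint_iff]
    constructor
    · rintro ⟨he, x, hxe, hxM⟩; exact ⟨x, hxM, he, hxe⟩
    · rintro ⟨x, hxM, he, hxe⟩; exact ⟨he, x, hxe, hxM⟩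
  rw [hC, sum_biUnion]
  intro x hxM x' hx'M hxx'
  refine disjoint_left.2 fun e hex hex' => hxx' ?_
  obtain ⟨he, hxe⟩ := mem_filter.1 hex
  exact card_le_one.1 (h e he) x (mem_inter.2 ⟨hxe, hxM⟩) x'
    (mem_inter.2 ⟨(mem_filter.1 hex').2, hx'M⟩)

section TwoRegular

variable {k : ℕ}

lemma card_inter_le_of_lt_card_union {e f : Finset V} (he : #e ≤ k) (hf : #f ≤ k)
    (hunion : k + k / 2 < #(e ∪ f)) : #(e ∩ f) ≤ k - k / 2 - 1 := by
  have := card_union_add_card_inter e f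
  omega

lemma IsMaximumStronglyIndependent.disjoint
    (hreg : ∀ e ∈ E, ∀ v ∈ e, #{g ∈ E | v ∈ g} = 2) (hM : IsMaximumStronglyIndependent E M)
    {g g' : Finset V} (hg : g ∈ E) (hg' : g' ∈ E) (hgg' : g ≠ g') (hgM : Disjoint g M)
    (hg'M : Disjoint g' M) : Disjoint g g' := by
  obtain ⟨hMU, hMind, hmax⟩ := hM
  by_contra hnd
  obtain ⟨y, hyg, hyg'⟩ := not_disjoint_iff.1 hnd
  have hind : IsStronglyIndependent E (insert y M) := hMind.insert fun h hh hyh => by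
    rcases eq_or_eq_of_card_filter_mem_eq_two (hreg g hg y hyg) hg hg' hgg' hyg hyg' hh hyh
      with rfl | rfl
    exacts [hgM, hg'M]
  have hcard := hmax _ (insert_subset (mem_biUnion.2 ⟨g, hg, hyg⟩) hMU) hind
  rw [card_insert_of_notMem (disjoint_left.1 hgM hyg)] at hcard
  omega

/-- There is no augmenting path `y - x - z` from an edge `g` missing `M`, through the two edges
`e, f` at `x ∈ M`, to another edge `g'` missing `M`: otherwise `M - x + y + z` would beat `M`. -/
lemma IsMaximumStronglyIndependent.eq_of_mem_of_mem
    (hreg : ∀ e ∈ E, ∀ v ∈ e, #{g ∈ E | v ∈ g} = 2) (hM : IsMaximumStronglyIndependent E M)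
    {e f g g' : Finset V} {y z : V} (hxM : x ∈ M) (he : e ∈ E) (hf : f ∈ E) (hef : e ≠ f)
    (hxe : x ∈ e) (hxf : x ∈ f) (hg : g ∈ E) (hg' : g' ∈ E) (hgM : Disjoint g M)
    (hg'M : Disjoint g' M) (hye : y ∈ e) (hyg : y ∈ g) (hzf : z ∈ f) (hzg' : z ∈ g') :
    g = g' := by
  obtain ⟨hMU, hMind, hmax⟩ := hM
  by_contra hgg'
  have hz_edges : ∀ h ∈ E, z ∈ h → h = f ∨ h = g' :=
    fun h hh hzh => eq_or_eq_of_card_filter_mem_eq_two (hreg f hf z hzf) hf hg'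
      (ne_of_mem_of_disjoint hxf hxM hg'M) hzf hzg' hh hzh
  have hze : z ∉ e := fun hze =>
    (hz_edges e he hze).elim hef (ne_of_mem_of_disjoint hxe hxM hg'M)
  have hzg : z ∉ g := fun hzg =>
    (hz_edges g hg hzg).elim (fun h => ne_of_mem_of_disjoint hxf hxM hgM h.symm) hgg'
  have hM₁ : IsStronglyIndependent E (insert z (M.erase x)) :=
    (hMind.mono (erase_subset x M)).insert fun h hh hzh => by
      rcases hz_edges h hh hzh with rfl | rfl
      exacts [hMind.disjoint_erase hf hxf hxM, hg'M.mono_right (erase_subset x M)]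
  have hM₂ : IsStronglyIndependent E (insert y (insert z (M.erase x))) :=
    hM₁.insert fun h hh hyh => by
      rcases eq_or_eq_of_card_filter_mem_eq_two (hreg e he y hye) he hg
        (ne_of_mem_of_disjoint hxe hxM hgM) hye hyg hh hyh with rfl | rfl
      · exact disjoint_insert_right.2 ⟨hze, hMind.disjoint_erase he hxe hxM⟩
      · exact disjoint_insert_right.2 ⟨hzg, hgM.mono_right (erase_subset x M)⟩
  have hcard := hmax _ (insert_subset (mem_biUnion.2 ⟨e, he, hye⟩)
    (insert_subset (mem_biUnion.2 ⟨f, hf, hzf⟩) ((erase_subset x M).trans hMU))) hM₂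
  have hy : y ∉ insert z (M.erase x) := by
    rw [mem_insert, not_or]
    exact ⟨fun h => hze (h ▸ hye), fun h => disjoint_left.1 hgM hyg (mem_of_mem_erase h)⟩
  rw [card_insert_of_notMem hy,
    card_insert_of_notMem fun h => disjoint_left.1 hg'M hzg' (mem_of_mem_erase h),
    card_erase_of_mem hxM] at hcard
  have := card_pos.2 ⟨x, hxM⟩
  omega

/-- If both edges at `x` meet edges missing `M`, they meet the same one `g`, by the absence of
augmenting paths, and then `k + k / 2 < #(e ∪ g)` bounds `#(e ∩ g)`. -/
lemma card_inter_add_card_inter_le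
    (hreg : ∀ e ∈ E, ∀ v ∈ e, #{g ∈ E | v ∈ g} = 2) (hM : IsMaximumStronglyIndependent E M)
    (hk : ∀ e ∈ E, #e ≤ k)
    (hspread : ∀ e ∈ E, ∀ f ∈ E, e ≠ f → (e ∩ f).Nonempty → k + k / 2 < #(e ∪ f))
    {e f : Finset V} (hxM : x ∈ M) (he : e ∈ E) (hf : f ∈ E) (hef : e ≠ f) (hxe : x ∈ e)
    (hxf : x ∈ f) :
    #(e ∩ {g ∈ E | Disjoint g M}.biUnion id) + #(f ∩ {g ∈ E | Disjoint g M}.biUnion id) ≤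
      2 * (k / 2) := by
  set Y := {g ∈ E | Disjoint g M}.biUnion id
  have hmemY : ∀ {h : Finset V} {y : V}, y ∈ h ∩ Y ↔ y ∈ h ∧ ∃ g ∈ E, Disjoint g M ∧ y ∈ g := by
    simp [Y, and_assoc]
  have hcap : ∀ h ∈ E, x ∈ h → #(h ∩ Y) ≤ k - 1 := by
    intro h hh hxh
    have hsub : h ∩ Y ⊆ h.erase x := fun v hv => by
      obtain ⟨hvh, g, -, hgM, hvg⟩ := hmemY.1 hv
      exact mem_erase.2 ⟨fun hvx => disjoint_left.1 hgM hvg (hvx ▸ hxM), hvh⟩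
    have := card_le_card hsub
    rw [card_erase_of_mem hxh] at this
    have := hk h hh
    omega
  have hsmall : ∀ h ∈ E, x ∈ h → ∀ g ∈ E, Disjoint g M → (h ∩ g).Nonempty → h ∩ Y ⊆ g →
      #(h ∩ Y) ≤ k - k / 2 - 1 := fun h hh hxh g hg hgM hne hsub =>
    (card_le_card (subset_inter inter_subset_left hsub)).trans <| card_inter_le_of_lt_card_union
      (hk h hh) (hk g hg) (hspread h hh g hg (ne_of_mem_of_disjoint hxh hxM hgM) hne)
  rcases (e ∩ Y).eq_empty_or_nonempty with hA | ⟨y₀, hy₀⟩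
  · rw [hA, card_empty]
    have := hcap f hf hxf
    omega
  rcases (f ∩ Y).eq_empty_or_nonempty with hB | ⟨z₀, hz₀⟩
  · rw [hB, card_empty]
    have := hcap e he hxe
    omega
  obtain ⟨hy₀e, g₀, hg₀, hg₀M, hy₀g₀⟩ := hmemY.1 hy₀
  obtain ⟨hz₀f, g₁, hg₁, hg₁M, hz₀g₁⟩ := hmemY.1 hz₀
  have heY : e ∩ Y ⊆ g₁ := fun y hy => by
    obtain ⟨hye, g, hg, hgM, hyg⟩ := hmemY.1 hy
    rwa [← hM.eq_of_mem_of_mem hreg hxM he hf hef hxe hxf hg hg₁ hgM hg₁M hye hyg hz₀f hz₀g₁]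
  have hfY : f ∩ Y ⊆ g₀ := fun z hz => by
    obtain ⟨hzf, g, hg, hgM, hzg⟩ := hmemY.1 hz
    rwa [hM.eq_of_mem_of_mem hreg hxM he hf hef hxe hxf hg₀ hg hg₀M hgM hy₀e hy₀g₀ hzf hzg]
  have := hsmall e he hxe g₁ hg₁ hg₁M ⟨y₀, mem_inter.2 ⟨hy₀e, heY hy₀⟩⟩ heY
  have := hsmall f hf hxf g₀ hg₀ hg₀M ⟨z₀, mem_inter.2 ⟨hz₀f, hfY hz₀⟩⟩ hfY
  omega

lemma card_filter_mem_eq_two_of_mem_biUnion (hreg : ∀ e ∈ E, ∀ v ∈ e, #{g ∈ E | v ∈ g} = 2)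
    {v : V} (hv : v ∈ E.biUnion id) : #{e ∈ E | v ∈ e} = 2 := by
  obtain ⟨e, he, hve⟩ := mem_biUnion.1 hv
  exact hreg e he v hve

lemma sum_card_eq_card_biUnion_mul (hreg : ∀ e ∈ E, ∀ v ∈ e, #{g ∈ E | v ∈ g} = 2) :
    ∑ e ∈ E, #e = #(E.biUnion id) * 2 := by
  rw [← sum_card_inter fun v => card_filter_mem_eq_two_of_mem_biUnion hreg]
  exact sum_congr rfl fun e he => by
    rw [inter_eq_right.2 (fun v hv => mem_biUnion.2 ⟨e, he, hv⟩ : e ⊆ E.biUnion id)]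

lemma IsMaximumStronglyIndependent.card_filter_not_disjoint
    (hreg : ∀ e ∈ E, ∀ v ∈ e, #{g ∈ E | v ∈ g} = 2) (hM : IsMaximumStronglyIndependent E M) :
    #{e ∈ E | ¬Disjoint e M} = #M * 2 := by
  calc #{e ∈ E | ¬Disjoint e M} = ∑ x ∈ M, #{e ∈ E | x ∈ e} := by
        simpa only [card_eq_sum_ones] using
          hM.isStronglyIndependent.sum_filter_not_disjoint fun _ => 1
    _ = #M * 2 := by
      rw [sum_congr rfl fun x hx =>
        card_filter_mem_eq_two_of_mem_biUnion hreg (hM.subset_biUnion hx), sum_const, smul_eq_mul]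

lemma IsMaximumStronglyIndependent.card_biUnion_le_mul
    (hreg : ∀ e ∈ E, ∀ v ∈ e, #{g ∈ E | v ∈ g} = 2) (hM : IsMaximumStronglyIndependent E M)
    (hk : ∀ e ∈ E, #e ≤ k)
    (hspread : ∀ e ∈ E, ∀ f ∈ E, e ≠ f → (e ∩ f).Nonempty → k + k / 2 < #(e ∪ f)) :
    #(E.biUnion id) ≤ (k + k / 2) * #M := by
  set Y := {g ∈ E | Disjoint g M}.biUnion id
  have hdeg : ∀ x ∈ M, #{e ∈ E | x ∈ e} = 2 :=
    fun x hx => card_filter_mem_eq_two_of_mem_biUnion hreg (hM.subset_biUnion hx)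
  have hC : ∑ e ∈ E with ¬Disjoint e M, #e ≤ #M * (2 * k) := by
    rw [hM.isStronglyIndependent.sum_filter_not_disjoint, ← smul_eq_mul]
    refine sum_le_card_nsmul _ _ _ fun x hx => ?_
    rw [← hdeg x hx, ← smul_eq_mul]
    exact sum_le_card_nsmul _ _ _ fun e he => hk e (mem_filter.1 he).1
  have hI : ∑ g ∈ E with Disjoint g M, #g = #Y := by
    refine (card_biUnion fun g hg g' hg' hgg' => ?_).symm
    exact hM.disjoint hreg (mem_filter.1 hg).1 (mem_filter.1 hg').1 hgg'
      (mem_filter.1 hg).2 (mem_filter.1 hg').2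
  have hcover : Y ⊆ {h ∈ E | ¬Disjoint h M}.biUnion (· ∩ Y) := fun y hy => by
    obtain ⟨g, hgI, hyg⟩ := mem_biUnion.1 hy
    obtain ⟨hg, hgM⟩ := mem_filter.1 hgI
    obtain ⟨h, hh, hhg⟩ := exists_mem_ne (by rw [hreg g hg y hyg]; omega) g
    obtain ⟨hhE, hyh⟩ := mem_filter.1 hh
    have hhM : ¬Disjoint h M := fun hhM =>
      disjoint_left.1 (hM.disjoint hreg hhE hg hhg hhM hgM) hyh hyg
    exact mem_biUnion.2 ⟨h, mem_filter.2 ⟨hhE, hhM⟩, mem_inter.2 ⟨hyh, hy⟩⟩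
  have hY : #Y ≤ #M * (2 * (k / 2)) := by
    refine (card_le_card hcover).trans (card_biUnion_le.trans ?_)
    rw [hM.isStronglyIndependent.sum_filter_not_disjoint, ← smul_eq_mul]
    refine sum_le_card_nsmul _ _ _ fun x hx => ?_
    obtain ⟨e, f, hef, hpair⟩ := card_eq_two.1 (hdeg x hx)
    have he : e ∈ {e ∈ E | x ∈ e} := hpair ▸ mem_insert_self e {f}
    have hf : f ∈ {e ∈ E | x ∈ e} := hpair ▸ mem_insert_of_mem (mem_singleton_self f)
    rw [hpair, sum_pair hef]
    exact card_inter_add_card_inter_le hreg hM hk hspread hx (mem_filter.1 he).1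
      (mem_filter.1 hf).1 hef (mem_filter.1 he).2 (mem_filter.1 hf).2
  have hsplit := sum_filter_add_sum_filter_not E (fun g => Disjoint g M) card
  have hhand := sum_card_eq_card_biUnion_mul hreg
  linarith

lemma hasSmallTransversal_of_regular (hreg : ∀ e ∈ E, ∀ v ∈ e, #{g ∈ E | v ∈ g} = 2)
    (hne : ∀ e ∈ E, e.Nonempty) (hk : ∀ e ∈ E, #e ≤ k)
    (hspread : ∀ e ∈ E, ∀ f ∈ E, e ≠ f → (e ∩ f).Nonempty → k + k / 2 < #(e ∪ f)) :
    HasSmallTransversal (k + k / 2) E := by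
  obtain ⟨M, hM⟩ := exists_isMaximumStronglyIndependent E
  obtain ⟨T, hT, hTcard⟩ :=
    exists_isTransversal_card_le {g ∈ E | Disjoint g M} fun g hg => hne g (mem_filter.1 hg).1
  refine ⟨M ∪ T, fun e he => ?_, ?_⟩
  · by_cases heM : Disjoint e M
    · exact hT.mono subset_union_right e (mem_filter.2 ⟨he, heM⟩)
    · obtain ⟨v, hve, hvM⟩ := not_disjoint_iff.1 heM
      exact ⟨v, mem_inter.2 ⟨hve, mem_union_left T hvM⟩⟩
  · set I := {g ∈ E | Disjoint g M}
    have hcard : (k + k / 2) * #(M ∪ T) ≤ (k + k / 2) * #M + (k + k / 2) * #I := by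
      rw [← mul_add]
      exact Nat.mul_le_mul_left _ ((card_union_le M T).trans (by omega))
    have hE : #E * (k + k / 2) = 2 * ((k + k / 2) * #M) + (k + k / 2) * #I := by
      rw [← card_filter_add_card_filter_not (fun g => Disjoint g M),
        hM.card_filter_not_disjoint hreg]
      ring
    have hw : ∑ e ∈ E, (k + k / 2 - #e) + ∑ e ∈ E, #e = #E * (k + k / 2) := by
      rw [← sum_add_distrib, sum_congr rfl fun e he => Nat.sub_add_cancel ((hk e he).trans
        (Nat.le_add_right k (k / 2))), sum_const, smul_eq_mul]
    have hU := hM.card_biUnion_le_mul hreg hk hspread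
    have hhand := sum_card_eq_card_biUnion_mul hreg
    unfold potential
    linarith

end TwoRegular

lemma sum_card_filter_not_mem_lt {e : Finset V} (he : e ∈ E) (hxe : x ∈ e) :
    ∑ g ∈ E with x ∉ g, #g < ∑ g ∈ E, #g :=
  sum_lt_sum_of_subset (filter_subset _ E) he (fun h => (mem_filter.1 h).2 hxe)
    (card_pos.2 ⟨x, hxe⟩) fun _ _ _ => Nat.zero_le _

lemma sum_card_insert_erase_lt {e₀ : Finset V} (he₀ : e₀ ∈ E) (hxe₀ : x ∈ e₀) :
    ∑ g ∈ insert (e₀.erase x) (E.erase e₀), #g < ∑ g ∈ E, #g := by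
  have := sum_insert_erase_add_le card (e₀.erase x) he₀
  rw [card_erase_of_mem hxe₀] at this
  have := card_pos.2 ⟨x, hxe₀⟩
  omega

theorem hasSmallTransversal (k : ℕ) (E : Finset (Finset V)) (hne : ∀ e ∈ E, e.Nonempty)
    (hk : ∀ e ∈ E, #e ≤ k) : HasSmallTransversal (k + k / 2) E := by
  induction hN : ∑ e ∈ E, #e using Nat.strong_induction_on generalizing E with
  | _ N ih =>
  subst hN
  rcases E.eq_empty_or_nonempty with rfl | -
  · exact ⟨∅, by simp [IsTransversal], by simp⟩
  have hdel : ∀ x, ∀ e ∈ E, x ∈ e →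
      k + k / 2 + potential (k + k / 2) {g ∈ E | x ∉ g} ≤ potential (k + k / 2) E →
      HasSmallTransversal (k + k / 2) E := fun x e he hxe hle =>
    (ih _ (sum_card_filter_not_mem_lt he hxe) _ (fun g hg => hne g (mem_filter.1 hg).1)
      (fun g hg => hk g (mem_filter.1 hg).1) rfl).of_filter hle
  by_cases hsingle : ∃ x, {x} ∈ E
  · obtain ⟨x, hx⟩ := hsingle
    exact hdel x {x} hx (mem_singleton_self x) (add_potential_filter_le_of_singleton_mem _ hx)
  by_cases hdeg3 : ∃ x, 3 ≤ #{e ∈ E | x ∈ e}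
  · obtain ⟨x, hx⟩ := hdeg3
    obtain ⟨e, he⟩ := card_pos.1 (by omega : 0 < #{e ∈ E | x ∈ e})
    exact hdel x e (mem_filter.1 he).1 (mem_filter.1 he).2
      (add_potential_filter_le_of_three_le_card k hk hx)
  by_cases hdeg1 : ∃ x, #{e ∈ E | x ∈ e} = 1
  · obtain ⟨x, hx⟩ := hdeg1
    obtain ⟨e₀, hx⟩ := card_eq_one.1 hx
    obtain ⟨he₀, hxe₀⟩ : e₀ ∈ E ∧ x ∈ e₀ := mem_filter.1 (hx ▸ mem_singleton_self e₀)
    have hne₀ : (e₀.erase x).Nonempty :=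
      ((hne e₀ he₀).exists_eq_singleton_or_nontrivial.resolve_left
        fun ⟨y, hy⟩ => hsingle ⟨y, hy ▸ he₀⟩).erase_nonempty
    exact .of_insert_erase he₀ hx (ih _ (sum_card_insert_erase_lt he₀ hxe₀) _
      ((forall_mem_insert ..).2 ⟨hne₀, fun e he => hne e (mem_of_mem_erase he)⟩)
      ((forall_mem_insert ..).2 ⟨(card_le_card (erase_subset x e₀)).trans (hk e₀ he₀),
        fun e he => hk e (mem_of_mem_erase he)⟩) rfl)
  push Not at hsingle hdeg1 hdeg3
  have hreg : ∀ e ∈ E, ∀ v ∈ e, #{g ∈ E | v ∈ g} = 2 := fun e he v hve => by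
    have := hdeg1 v
    have := hdeg3 v
    have : 0 < #{g ∈ E | v ∈ g} := card_pos.2 ⟨e, mem_filter.2 ⟨he, hve⟩⟩
    omega
  by_cases hpair : ∃ e ∈ E, ∃ f ∈ E, e ≠ f ∧ (e ∩ f).Nonempty ∧ #(e ∪ f) ≤ k + k / 2
  · obtain ⟨e, he, f, hf, hef, ⟨x, hx⟩, hunion⟩ := hpair
    obtain ⟨hxe, hxf⟩ := mem_inter.1 hx
    exact hdel x e he hxe (add_potential_filter_le_of_card_union_le he hf hef hxe hxf
      (fun v hv => hreg e he v (mem_inter.1 hv).1) ((hk e he).trans (Nat.le_add_right k _))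
      ((hk f hf).trans (Nat.le_add_right k _)) hunion)
  push Not at hpair
  exact hasSmallTransversal_of_regular hreg hne hk hpair

end ChvatalMcDiarmid

open ChvatalMcDiarmid in
/-- Chvátal–McDiarmid: a `k`-uniform hypergraph with `n` vertices and `m` edges has a
transversal of size at most `(⌊k/2⌋·m + n)/⌊3k/2⌋`. -/
theorem stmt_3 {V : Type*} [Fintype V] [DecidableEq V] (k m n : ℕ) (hk : 1 ≤ k)
    (E : Finset (Finset V)) (huniform : ∀ e ∈ E, e.card = k) (hm : E.card = m)
    (hn : Fintype.card V = n) :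
    ∃ T : Finset V, (∀ e ∈ E, (e ∩ T).Nonempty) ∧
      (T.card : ℝ) ≤ ((k / 2 : ℕ) * m + n : ℝ) / ((3 * k / 2 : ℕ) : ℝ) := by
  obtain ⟨T, hT, hcard⟩ := hasSmallTransversal k E
    (fun e he => card_pos.1 (by rw [huniform e he]; omega)) (fun e he => (huniform e he).le)
  refine ⟨T, hT, ?_⟩
  have hweight : ∑ e ∈ E, (k + k / 2 - #e) = k / 2 * m := by
    rw [sum_congr rfl fun e he => by rw [huniform e he, Nat.add_sub_cancel_left],
      sum_const, smul_eq_mul, hm, mul_comm]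
  have hvert : #(E.biUnion id) ≤ n := hn ▸ card_le_univ _
  have hnat : (k + k / 2) * #T ≤ k / 2 * m + n := by
    unfold potential at hcard
    omega
  rw [show 3 * k / 2 = k + k / 2 by omega, le_div_iff₀ (Nat.cast_pos.2 (by omega)), mul_comm]
  exact_mod_cast hnat
end

section
/- Let G be a finite simple connected graph of diameter 2 on n vertices, and let H be a subgraph of G with maximum degree at most k (k a positive integer). If a robber is restricted to move along edges of H while k cops may move along edges of G, then the cops have a winning strategy: formally, if for every vertex x of H and every list v₁,…,v_l (l ≤ k) of its H-neighbors, each vᵢ has a G-neighbor, then k cops suffice to catch a robber confined to H. -/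
/-- Cops-to-move game state is winning for `k` cops moving along `G`, against a robber
restricted to the subgraph `H`: the cops can move (each along an edge of `G` or staying)
so that either a cop lands on the robber, or every robber move (along an edge of `H` or
staying) leads to a winning state for the cops. -/
inductive RestrictedCopsWinFrom {V : Type*} (G : SimpleGraph V) (H : G.Subgraph) {k : ℕ} :
    (Fin k → V) → V → Prop
  | catch (c : Fin k → V) (r : V) (c' : Fin k → V)
      (hmove : ∀ i, c' i = c i ∨ G.Adj (c i) (c' i))
      (hcatch : ∃ i, c' i = r) :
      RestrictedCopsWinFrom G H c r
  | step (c : Fin k → V) (r : V) (c' : Fin k → V)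
      (hmove : ∀ i, c' i = c i ∨ G.Adj (c i) (c' i))
      (h : ∀ r', (r' = r ∨ H.Adj r r') → RestrictedCopsWinFrom G H c' r') :
      RestrictedCopsWinFrom G H c r

/-!
From any position the cops win within three moves. Let `f` list the `H`-neighbours of the
robber's vertex `r`, padded with `r` (there are at most `k` of them). Since `G` has diameter 2,
every cop can step to a vertex adjacent or equal to its target `f i`. If the robber now moves
to a neighbour of `r`, the cop assigned to it catches him; if he stays, the cops move onto `f`,
after which every vertex of the closed `H`-neighbourhood of `r` (including `r`, which is `f 0`
or adjacent to it since `k ≥ 1`) is at distance at most one from a cop.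
-/

theorem Set.exists_fin_cover_of_ncard_le {α : Type*} {k : ℕ} {S : Set α} [Finite S]
    (hcard : S.ncard ≤ k) (a : α) :
    ∃ f : Fin k → α, S ⊆ Set.range f ∧ Set.range f ⊆ insert a S := by
  let e : S ↪ Fin k := (Finite.equivFin S).toEmbedding.trans
    (Fin.castLEEmb (by rwa [Nat.card_coe_set_eq]))
  refine ⟨Function.extend e Subtype.val fun _ => a, fun s hs => ⟨e ⟨s, hs⟩, ?_⟩, ?_⟩
  · exact e.injective.extend_apply _ _ _
  · rintro _ ⟨i, rfl⟩
    by_cases h : ∃ s, e s = i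
    · obtain ⟨s, rfl⟩ := h
      rw [e.injective.extend_apply]
      exact Or.inr s.2
    · rw [Function.extend_apply' _ _ _ h]
      exact Or.inl rfl

theorem SimpleGraph.exists_step_step_of_diam_two {V : Type*} {G : SimpleGraph V}
    (hdiam : ∀ u v : V, u ≠ v → G.Adj u v ∨ ∃ w, G.Adj u w ∧ G.Adj w v) (u v : V) :
    ∃ w, (w = u ∨ G.Adj u w) ∧ (v = w ∨ G.Adj w v) := by
  by_cases huv : u = v
  · exact ⟨u, Or.inl rfl, Or.inl huv.symm⟩
  rcases hdiam u v huv with hadj | ⟨w, huw, hwv⟩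
  · exact ⟨u, Or.inl rfl, Or.inr hadj⟩
  · exact ⟨w, Or.inr huw, Or.inr hwv⟩

namespace RestrictedCopsWinFrom

variable {V : Type*} {G : SimpleGraph V} {H : G.Subgraph} {k : ℕ}

theorem of_exists_near {c : Fin k → V} {r : V} (h : ∃ i, c i = r ∨ G.Adj (c i) r) :
    RestrictedCopsWinFrom G H c r := by
  obtain ⟨i, hi⟩ := h
  refine .catch c r (Function.update c i r) (fun j => ?_) ⟨i, Function.update_self ..⟩
  rcases eq_or_ne j i with rfl | hj
  · rw [Function.update_self]
    exact hi.imp Eq.symm id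
  · exact Or.inl (Function.update_of_ne hj ..)

theorem of_move_near_closedNeighborhood {c c' : Fin k → V} {r : V}
    (hmove : ∀ i, c' i = c i ∨ G.Adj (c i) (c' i))
    (hnear : ∀ r', (r' = r ∨ H.Adj r r') → ∃ i, c' i = r' ∨ G.Adj (c' i) r') :
    RestrictedCopsWinFrom G H c r :=
  .step c r c' hmove fun r' hr' => of_exists_near (hnear r' hr')

theorem of_diam_two [Finite V]
    (hdiam : ∀ u v : V, u ≠ v → G.Adj u v ∨ ∃ w, G.Adj u w ∧ G.Adj w v) (hk : 1 ≤ k)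
    (c : Fin k → V) {r : V} (hdeg : (H.neighborSet r).ncard ≤ k) :
    RestrictedCopsWinFrom G H c r := by
  obtain ⟨f, hcover, hrange⟩ :=
    Set.exists_fin_cover_of_ncard_le hdeg r
  have hf : ∀ i, f i = r ∨ G.Adj r (f i) := fun i =>
    (hrange ⟨i, rfl⟩).imp id SimpleGraph.Subgraph.Adj.adj_sub
  choose c₁ hc₁ hc₁f using fun i => SimpleGraph.exists_step_step_of_diam_two hdiam (c i) (f i)
  refine .step c r c₁ hc₁ fun r' hr' => ?_
  rcases hr' with rfl | hr'
  · refine of_move_near_closedNeighborhood hc₁f fun r'' hr'' => ?_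
    rcases hr'' with rfl | hr''
    · exact ⟨⟨0, hk⟩, (hf _).imp id G.adj_symm⟩
    · obtain ⟨i, hi⟩ := hcover hr''
      exact ⟨i, Or.inl hi⟩
  · obtain ⟨i, rfl⟩ := hcover hr'
    exact of_exists_near ⟨i, (hc₁f i).imp Eq.symm id⟩

end RestrictedCopsWinFrom

theorem stmt_4_general {V : Type*} [Fintype V] (G : SimpleGraph V) (hconn : G.Connected)
    (hdiam : ∀ u v : V, u ≠ v → G.Adj u v ∨ ∃ w, G.Adj u w ∧ G.Adj w v)
    (H : G.Subgraph) (k : ℕ) (hk : 1 ≤ k)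
    (hdeg : ∀ x ∈ H.verts, (H.neighborSet x).ncard ≤ k) :
    ∃ c₀ : Fin k → V, ∀ r₀ ∈ H.verts, RestrictedCopsWinFrom G H c₀ r₀ := by
  obtain ⟨v₀⟩ := hconn.nonempty
  exact ⟨fun _ => v₀, fun r₀ hr₀ =>
    RestrictedCopsWinFrom.of_diam_two hdiam hk _ (hdeg r₀ hr₀)⟩

/-- If `G` is connected of diameter 2 and `H ⊆ G` has maximum degree at most `k ≥ 1`,
then `k` cops moving on `G` can catch a robber restricted to `H`. -/
theorem stmt_4 {V : Type*} [Fintype V] (G : SimpleGraph V) (hconn : G.Connected)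
    (hdiam : ∀ u v : V, u ≠ v → G.Adj u v ∨ ∃ w, G.Adj u w ∧ G.Adj w v)
    (H : G.Subgraph) (k : ℕ) (hk : 1 ≤ k)
    (hdeg : ∀ x ∈ H.verts, (H.neighborSet x).ncard ≤ k)
    (hnbr : ∀ x ∈ H.verts, ∀ v, H.Adj x v → ∃ w, G.Adj v w) :
    ∃ c₀ : Fin k → V, ∀ r₀ ∈ H.verts, RestrictedCopsWinFrom G H c₀ r₀ :=
  stmt_4_general G hconn hdiam H k hk hdeg
end

section
/- Let G be a finite simple connected graph of diameter 2 with n vertices. Then the cop number of G is at most √(2n). -/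
/-- `CopsWinFrom G c r` : with cops at positions `c` and robber at `r`, cops to move,
the `k` cops (moving along edges of `G` or staying) can catch the robber (who moves
along edges of `G` or stays). -/
inductive CopsWinFrom {V : Type*} (G : SimpleGraph V) {k : ℕ} : (Fin k → V) → V → Prop
  | catch (c : Fin k → V) (r : V) (c' : Fin k → V)
      (hmove : ∀ i, c' i = c i ∨ G.Adj (c i) (c' i))
      (hcatch : ∃ i, c' i = r) :
      CopsWinFrom G c r
  | step (c : Fin k → V) (r : V) (c' : Fin k → V)
      (hmove : ∀ i, c' i = c i ∨ G.Adj (c i) (c' i))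
      (h : ∀ r', (r' = r ∨ G.Adj r r') → CopsWinFrom G c' r') :
      CopsWinFrom G c r

/-- `k` cops have a winning strategy: they can choose initial positions such that,
wherever the robber starts, they catch him. -/
def CopsWin {V : Type*} (G : SimpleGraph V) (k : ℕ) : Prop :=
  ∃ c₀ : Fin k → V, ∀ r₀ : V, CopsWinFrom G c₀ r₀

/-- The cop number of `G`. -/
noncomputable def copNumber {V : Type*} (G : SimpleGraph V) : ℕ :=
  sInf {k | CopsWin G k}

open Finset

namespace CopsWinFrom

variable {V : Type*} {G : SimpleGraph V} {k : ℕ}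

lemma of_adj_or_eq {c : Fin k → V} {r : V} (i : Fin k) (h : r = c i ∨ G.Adj (c i) r) :
    CopsWinFrom G c r := by
  refine .catch c r (Function.update c i r) (fun i' => ?_) ⟨i, Function.update_self ..⟩
  rcases eq_or_ne i' i with rfl | hne
  · simpa using h
  · simp [Function.update_of_ne hne]

lemma of_move_dominating {c : Fin k → V} {r : V} (c' : Fin k → V)
    (hmove : ∀ i, c' i = c i ∨ G.Adj (c i) (c' i))
    (hdom : ∀ r', (r' = r ∨ G.Adj r r') → ∃ i, r' = c' i ∨ G.Adj (c' i) r') :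
    CopsWinFrom G c r :=
  .step c r c' hmove fun r' hr' => let ⟨i, hi⟩ := hdom r' hr'; of_adj_or_eq i hi

end CopsWinFrom

lemma Finset.exists_fin_cover {α : Type*} [Nonempty α] {m : ℕ} (s : Finset α) (h : #s ≤ m) :
    ∃ t : Fin m → α, ∀ x ∈ s, ∃ i, t i = x := by
  refine ⟨fun i => s.toList.getD i (Classical.arbitrary α), fun x hx => ?_⟩
  obtain ⟨i, hi, rfl⟩ := List.mem_iff_getElem.1 (Finset.mem_toList.2 hx)
  have him : i < m := (Finset.length_toList s ▸ hi).trans_le h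
  exact ⟨⟨i, him⟩, List.getD_eq_getElem _ _ hi⟩

namespace SimpleGraph

variable {V : Type*} (G : SimpleGraph V)

lemma exists_adj_or_eq_adj_or_eq_of_diam_two
    (hdiam : ∀ u v : V, u ≠ v → G.Adj u v ∨ ∃ w, G.Adj u w ∧ G.Adj w v) (x w : V) :
    ∃ y, (y = x ∨ G.Adj x y) ∧ (w = y ∨ G.Adj y w) := by
  by_cases hxw : x = w
  · exact ⟨x, Or.inl rfl, Or.inl hxw.symm⟩
  rcases hdiam x w hxw with h | ⟨y, hxy, hyw⟩
  · exact ⟨w, Or.inr h, Or.inl rfl⟩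
  · exact ⟨y, Or.inr hxy, Or.inr hyw⟩

variable [Fintype V] [DecidableEq V] [DecidableRel G.Adj]

def closedNbhd (v : V) : Finset V := insert v (G.neighborFinset v)

@[simp]
lemma mem_closedNbhd {v x : V} : x ∈ G.closedNbhd v ↔ x = v ∨ G.Adj v x := by
  simp [closedNbhd]

def guarded {j : ℕ} (g : Fin j → V) : Finset V := univ.biUnion fun i => G.closedNbhd (g i)

lemma mem_guarded {j : ℕ} {g : Fin j → V} {x : V} :
    x ∈ G.guarded g ↔ ∃ i, x ∈ G.closedNbhd (g i) := by
  simp [guarded]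

lemma guarded_snoc {j : ℕ} (g : Fin j → V) (v : V) :
    G.guarded (Fin.snoc g v : Fin (j + 1) → V) = G.guarded g ∪ G.closedNbhd v := by
  ext x
  simp only [mem_guarded, mem_union, Fin.exists_fin_succ', Fin.snoc_castSucc, Fin.snoc_last]

lemma card_guarded_snoc {j : ℕ} (g : Fin j → V) (v : V) :
    #(G.guarded (Fin.snoc g v : Fin (j + 1) → V)) =
      #(G.guarded g) + #(G.closedNbhd v \ G.guarded g) := by
  rw [guarded_snoc, union_comm, ← card_sdiff_add_card, add_comm]

/-- `j` guards that never move keep the robber out of `G.guarded g`; the remaining `m` cops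
spend their first move stepping next to every vertex of `N[r] \ G.guarded g`, which diameter 2
makes possible in a single move, so the robber's first move lands on a dominated vertex. -/
theorem copsWin_of_guards [Nonempty V]
    (hdiam : ∀ u v : V, u ≠ v → G.Adj u v ∨ ∃ w, G.Adj u w ∧ G.Adj w v)
    {j m : ℕ} (g : Fin j → V) (hm : ∀ r, #(G.closedNbhd r \ G.guarded g) ≤ m) :
    CopsWin G (j + m) := by
  let x₀ := Classical.arbitrary V
  choose step hstep_move hstep_dom using G.exists_adj_or_eq_adj_or_eq_of_diam_two hdiam x₀
  refine ⟨Fin.append g fun _ => x₀, fun r => ?_⟩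
  obtain ⟨t, ht⟩ := exists_fin_cover _ (hm r)
  refine CopsWinFrom.of_move_dominating (Fin.append g (step ∘ t)) ?_ fun r' hr' => ?_
  · refine Fin.addCases (fun i => ?_) (fun i => ?_)
    · simp
    · simpa [eq_comm] using hstep_move (t i)
  · by_cases hr'g : r' ∈ G.guarded g
    · obtain ⟨i, hi⟩ := G.mem_guarded.1 hr'g
      exact ⟨Fin.castAdd m i, by simpa using hi⟩
    · obtain ⟨i, rfl⟩ := ht r' (mem_sdiff.2 ⟨G.mem_closedNbhd.2 hr', hr'g⟩)
      exact ⟨Fin.natAdd j i, by simpa using hstep_dom (t i)⟩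

/-- If no `j` worked, then for any `t ≤ k` guards some `N[v]` would contain more than `k - t`
unguarded vertices; adding such `v` as the next guard, `k + 1` guards would cover at least
`∑ t ≤ k, (k + 1 - t) = (k + 1)(k + 2)/2 > n` vertices. `grow` is twice this partial sum,
written without subtraction. -/
theorem exists_guards_of_two_mul_card_lt (k : ℕ) (hk : 2 * Fintype.card V < (k + 1) * (k + 1)) :
    ∃ j ≤ k, ∃ g : Fin j → V, ∀ v, j + #(G.closedNbhd v \ G.guarded g) ≤ k := by
  by_contra! hbad
  have grow : ∀ t ≤ k + 1, ∃ g : Fin t → V, t * (2 * k + 3) ≤ 2 * #(G.guarded g) + t * t := by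
    intro t
    induction t with
    | zero => exact fun _ => ⟨Fin.elim0, by simp⟩
    | succ t ih =>
      intro ht
      obtain ⟨g, hg⟩ := ih (by omega)
      obtain ⟨v, hv⟩ := hbad t (by omega) g
      refine ⟨Fin.snoc g v, ?_⟩
      rw [card_guarded_snoc]
      nlinarith
  obtain ⟨g, hg⟩ := grow (k + 1) le_rfl
  have := (G.guarded g).card_le_univ
  nlinarith

end SimpleGraph

/-- A connected graph of diameter 2 on `n` vertices has cop number at most `√(2n)`. -/
theorem stmt_5 {V : Type*} [Fintype V] (G : SimpleGraph V) (hconn : G.Connected)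
    (hdiam : ∀ u v : V, u ≠ v → G.Adj u v ∨ ∃ w, G.Adj u w ∧ G.Adj w v) :
    (copNumber G : ℝ) ≤ Real.sqrt (2 * Fintype.card V) := by
  classical
  have := hconn.nonempty
  set k := Nat.sqrt (2 * Fintype.card V)
  obtain ⟨j, hjk, g, hg⟩ := G.exists_guards_of_two_mul_card_lt k (Nat.lt_succ_sqrt _)
  have hwin : CopsWin G (j + (k - j)) := G.copsWin_of_guards hdiam g fun r => by
    have := hg r; omega
  have hcop : copNumber G ≤ k := Nat.add_sub_cancel' hjk ▸ Nat.sInf_le hwin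
  calc (copNumber G : ℝ) ≤ k := by exact_mod_cast hcop
    _ ≤ Real.sqrt (2 * Fintype.card V) := by exact_mod_cast Real.nat_sqrt_le_real_sqrt
end

section
/- Every finite simple graph G on n ≥ 1 vertices has a √n-trap: there exists a vertex v and a placement of at most ⌊√n⌋ cops on vertices of G other than v such that every neighbor of v is controlled (i.e., equals or is adjacent to some cop's vertex). -/
/-!
Strong induction on `n`, with `k = ⌊√n⌋`. Let `v` have minimum degree `d`. Greedily pair up
neighbours of `v` that share a closed neighbour `w ≠ v`: one cop on `w` controls both, and the
unpaired neighbours `U` have pairwise disjoint closed neighbourhoods away from `v`. If the pairs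
and `U` number at most `k`, cops on the shared vertices and on `U` trap `v`. Otherwise either
`d ≥ 2k + 2`, and a cop on `v` controls `N[v]`, leaving fewer than `k²` vertices, which contain a
`(k - 1)`-trap by induction; or `K := d - (k + 1) ≤ k`, and cops on `k + 1 - K` unpaired
neighbours control at least `(k + 1 - K) d + 1 = (k + 1)² - K² + 1` vertices, leaving fewer than
`K²`, which contain a `(K - 1)`-trap by induction.
-/

open Finset

theorem Finset.exists_hitting_and_pairwiseDisjoint {α β : Type*} [DecidableEq α] [DecidableEq β]
    (f : α → Finset β) (A : Finset α) :
    ∃ S : Finset β, ∃ U ⊆ A, 2 * S.card + U.card ≤ A.card ∧ S ⊆ A.biUnion f ∧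
      (∀ a ∈ A, a ∉ U → ∃ s ∈ S, s ∈ f a) ∧ (U : Set α).PairwiseDisjoint f := by
  induction A using Finset.strongInduction with
  | H A ih =>
  by_cases h : ∃ a ∈ A, ∃ b ∈ A, a ≠ b ∧ ¬Disjoint (f a) (f b)
  · obtain ⟨a, ha, b, hb, hab, hnd⟩ := h
    obtain ⟨w, hwa, hwb⟩ := not_disjoint_iff.1 hnd
    have hb' : b ∈ A.erase a := mem_erase.2 ⟨hab.symm, hb⟩
    obtain ⟨S, U, hUA, hcard, hSA, hhit, hdisj⟩ :=
      ih ((A.erase a).erase b) ((erase_ssubset hb').trans (erase_ssubset ha))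
    refine ⟨insert w S, U, hUA.trans ((erase_subset _ _).trans (erase_subset _ _)), ?_, ?_, ?_,
      hdisj⟩
    · have := card_insert_le w S
      have := card_erase_of_mem hb'
      have := card_erase_of_mem ha
      have := card_pos.2 ⟨b, hb'⟩
      omega
    · refine insert_subset (mem_biUnion.2 ⟨a, ha, hwa⟩) (hSA.trans ?_)
      exact biUnion_subset_biUnion_of_subset_left _ ((erase_subset _ _).trans (erase_subset _ _))
    · intro x hx hxU
      by_cases hxa : x = a
      · exact ⟨w, mem_insert_self _ _, hxa ▸ hwa⟩
      by_cases hxb : x = b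
      · exact ⟨w, mem_insert_self _ _, hxb ▸ hwb⟩
      obtain ⟨s, hs, hsx⟩ := hhit x (mem_erase.2 ⟨hxb, mem_erase.2 ⟨hxa, hx⟩⟩) hxU
      exact ⟨s, mem_insert_of_mem hs, hsx⟩
  · push Not at h
    exact ⟨∅, A, Subset.rfl, by simp, empty_subset _, fun a ha haA => absurd ha haA,
      fun a ha b hb hab => h a ha b hb hab⟩

namespace SimpleGraph

variable {V : Type*} (G : SimpleGraph V)

def HasTrap (r : ℕ) : Prop :=
  ∃ v : V, ∃ S : Finset V, v ∉ S ∧ S.card ≤ r ∧ ∀ u, G.Adj v u → ∃ s ∈ S, u = s ∨ G.Adj s u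

def closedNeighborFinset [Fintype V] [DecidableEq V] [DecidableRel G.Adj] (u : V) : Finset V :=
  insert u (G.neighborFinset u)

variable {G}

theorem HasTrap.mono {r r' : ℕ} (h : G.HasTrap r) (hr : r ≤ r') : G.HasTrap r' := by
  obtain ⟨v, S, hvS, hS, hcov⟩ := h
  exact ⟨v, S, hvS, hS.trans hr, hcov⟩

theorem hasTrap_add_of_controls {C D : Finset V} (hCD : C ⊂ D)
    (hD : ∀ x ∈ D, ∃ c ∈ C, x = c ∨ G.Adj c x) {r : ℕ}
    (hrest : (D : Set V)ᶜ.Nonempty → (G.induce (D : Set V)ᶜ).HasTrap r) :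
    G.HasTrap (C.card + r) := by
  classical
  rcases (D : Set V)ᶜ.eq_empty_or_nonempty with hempty | hne
  · obtain ⟨w, -, hwC⟩ := exists_of_ssubset hCD
    have hDuniv : ∀ x, x ∈ D := Set.eq_univ_iff_forall.1 (Set.compl_empty_iff.1 hempty)
    exact ⟨w, C, hwC, le_self_add, fun u _ => hD u (hDuniv u)⟩
  obtain ⟨w, S, hwS, hS, hcov⟩ := hrest hne
  have hwD : (w : V) ∉ D := w.2
  refine ⟨w, S.map (Function.Embedding.subtype _) ∪ C, ?_, ?_, ?_⟩
  · simp only [mem_union, mem_map, Function.Embedding.coe_subtype, not_or]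
    exact ⟨fun ⟨s, hs, hsw⟩ => hwS (Subtype.ext hsw ▸ hs), fun hwC => hwD (hCD.1 hwC)⟩
  · calc _ ≤ (S.map _).card + C.card := card_union_le _ _
      _ ≤ C.card + r := by rw [card_map]; omega
  · intro u hu
    by_cases huD : u ∈ D
    · obtain ⟨c, hc, hcu⟩ := hD u huD
      exact ⟨c, mem_union_right _ hc, hcu⟩
    obtain ⟨s, hs, hsu⟩ := hcov ⟨u, huD⟩ hu
    refine ⟨s, mem_union_left _ (mem_map_of_mem _ hs), ?_⟩
    simpa [Subtype.ext_iff] using hsu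

theorem hasTrap_of_controls_of_card_lt_sq [Fintype V] {C D : Finset V} {m k : ℕ} (hCD : C ⊂ D)
    (hD : ∀ x ∈ D, ∃ c ∈ C, x = c ∨ G.Adj c x) (hsize : Fintype.card V < D.card + m * m)
    (hk : C.card + m ≤ k + 1)
    (hrest : (D : Set V)ᶜ.Nonempty →
      (G.induce (D : Set V)ᶜ).HasTrap (Nat.sqrt (Fintype.card V - D.card))) :
    G.HasTrap k := by
  have hDV : D.card ≤ Fintype.card V := card_le_univ D
  have hm : 1 ≤ m := by rcases m with _ | m <;> omega
  refine (hasTrap_add_of_controls hCD hD (r := m - 1) fun hne => ?_).mono (by omega)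
  refine (hrest hne).mono ?_
  have : Nat.sqrt (Fintype.card V - D.card) < m := Nat.sqrt_lt.2 (by omega)
  omega

section Finite

variable [Fintype V] [DecidableEq V] [DecidableRel G.Adj]

@[simp]
theorem mem_closedNeighborFinset {u x : V} :
    x ∈ G.closedNeighborFinset u ↔ x = u ∨ G.Adj u x := by
  simp [closedNeighborFinset]

theorem card_closedNeighborFinset (u : V) : (G.closedNeighborFinset u).card = G.degree u + 1 := by
  rw [closedNeighborFinset, card_insert_of_notMem (by simp), card_neighborFinset_eq_degree]

theorem card_closedNeighborFinset_erase {u v : V} (h : G.Adj v u) :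
    ((G.closedNeighborFinset u).erase v).card = G.degree u := by
  rw [card_erase_of_mem (by simpa using Or.inr h.symm), card_closedNeighborFinset,
    Nat.add_sub_cancel]

theorem card_mul_minDegree_le_card_biUnion {v : V} {U : Finset V} (hU : ∀ u ∈ U, G.Adj v u)
    (hdisj : (U : Set V).PairwiseDisjoint fun u => (G.closedNeighborFinset u).erase v) :
    U.card * G.minDegree ≤ (U.biUnion fun u => (G.closedNeighborFinset u).erase v).card := by
  rw [card_biUnion hdisj, ← smul_eq_mul]
  exact card_nsmul_le_sum _ _ _ fun u hu =>
    (card_closedNeighborFinset_erase (hU u hu)).symm ▸ G.minDegree_le_degree u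

theorem hasTrap_of_hitting {v : V} {S U : Finset V} (hUN : U ⊆ G.neighborFinset v)
    (hSN : S ⊆ (G.neighborFinset v).biUnion fun u => (G.closedNeighborFinset u).erase v)
    (hhit : ∀ a ∈ G.neighborFinset v, a ∉ U → ∃ s ∈ S, s ∈ (G.closedNeighborFinset a).erase v) :
    G.HasTrap (S.card + U.card) := by
  refine ⟨v, S ∪ U, ?_, card_union_le _ _, fun u hu => ?_⟩
  · simp only [mem_union, not_or]
    exact ⟨fun hvS => by simpa using hSN hvS, fun hvU => by simpa using hUN hvU⟩
  by_cases huU : u ∈ U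
  · exact ⟨u, mem_union_right _ huU, Or.inl rfl⟩
  obtain ⟨s, hs, hsu⟩ := hhit u (by simpa using hu) huU
  rw [mem_erase, mem_closedNeighborFinset] at hsu
  exact ⟨s, mem_union_left _ hs, hsu.2.imp Eq.symm Adj.symm⟩

theorem controls_insert_biUnion {v : V} {U : Finset V} (hU : U.Nonempty)
    (hadj : ∀ u ∈ U, G.Adj v u) :
    U ⊂ insert v (U.biUnion fun u => (G.closedNeighborFinset u).erase v) ∧
      ∀ x ∈ insert v (U.biUnion fun u => (G.closedNeighborFinset u).erase v),
        ∃ c ∈ U, x = c ∨ G.Adj c x := by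
  refine ⟨(ssubset_iff_of_subset fun u hu => ?_).2 ⟨v, mem_insert_self _ _, fun hv => ?_⟩, ?_⟩
  · exact mem_insert_of_mem (mem_biUnion.2 ⟨u, hu, by simpa using (hadj u hu).ne'⟩)
  · exact (hadj v hv).ne rfl
  · intro x hx
    rcases mem_insert.1 hx with rfl | hx
    · obtain ⟨u, hu⟩ := hU
      exact ⟨u, hu, Or.inr (hadj u hu).symm⟩
    · obtain ⟨u, hu, hxu⟩ := mem_biUnion.1 hx
      exact ⟨u, hu, ((mem_erase.1 hxu).2 |> mem_closedNeighborFinset.1)⟩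

end Finite

theorem hasTrap_sqrt_card [Fintype V] [Nonempty V] : G.HasTrap (Nat.sqrt (Fintype.card V)) := by
  induction hn : Fintype.card V using Nat.strong_induction_on generalizing V with
  | _ n ih =>
  classical
  set k := Nat.sqrt n
  have hn_lt : n < (k + 1) * (k + 1) := Nat.lt_succ_sqrt n
  have hpos : 0 < n := hn ▸ Fintype.card_pos
  have hrec : ∀ (C D : Finset V) (m : ℕ), C ⊂ D → (∀ x ∈ D, ∃ c ∈ C, x = c ∨ G.Adj c x) →
      n < D.card + m * m → C.card + m ≤ k + 1 → G.HasTrap k := by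
    intro C D m hCD hD hsize hCm
    refine hasTrap_of_controls_of_card_lt_sq hCD hD (hn ▸ hsize) hCm fun hne => ?_
    have := hne.to_subtype
    have hcard : Fintype.card ↥(D : Set V)ᶜ = n - D.card := by
      rw [Fintype.card_compl_set, hn]; simp
    obtain ⟨x, hx⟩ := (exists_of_ssubset hCD).imp fun _ h => h.1
    have := card_pos.2 ⟨x, hx⟩
    exact hn ▸ ih _ (by omega) hcard
  obtain ⟨v, hv⟩ := G.exists_minimal_degree_vertex
  obtain ⟨S, U, hUN, hSU, hSN, hhit, hdisj⟩ := exists_hitting_and_pairwiseDisjoint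
    (fun u => (G.closedNeighborFinset u).erase v) (G.neighborFinset v)
  rw [card_neighborFinset_eq_degree] at hSU
  by_cases hsmall : S.card + U.card ≤ k
  · exact (hasTrap_of_hitting hUN hSN hhit).mono hsmall
  by_cases hbig : 2 * k + 2 ≤ G.degree v
  · obtain ⟨w, hw⟩ := (G.degree_pos_iff_exists_adj v).1 (by omega)
    refine hrec {v} (G.closedNeighborFinset v) k ?_ ?_ ?_ (by simp [add_comm])
    · refine (ssubset_iff_of_subset (by simp)).2 ⟨w, by simp [hw], by simpa using hw.ne'⟩
    · exact fun x hx => ⟨v, mem_singleton_self v, by simpa using hx⟩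
    · rw [card_closedNeighborFinset]; nlinarith
  set K := G.degree v - (k + 1)
  obtain ⟨U₀, hU₀U, hU₀card⟩ := exists_subset_card_eq (show k + 1 - K ≤ U.card by omega)
  have hadj : ∀ u ∈ U₀, G.Adj v u := fun u hu => by simpa using hUN (hU₀U hu)
  obtain ⟨hCD, hD⟩ := controls_insert_biUnion (card_pos.1 (by omega)) hadj
  refine hrec U₀ _ K hCD hD ?_ (by omega)
  have hvB : v ∉ U₀.biUnion fun u => (G.closedNeighborFinset u).erase v := by simp
  have hB := card_mul_minDegree_le_card_biUnion hadj (hdisj.subset hU₀U)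
  have hsq : (k + 1 - K) * G.degree v + K * K = (k + 1) * (k + 1) := by
    rw [show G.degree v = k + 1 + K by omega]
    zify [show K ≤ k + 1 by omega]
    ring
  rw [hv, hU₀card] at hB
  rw [card_insert_of_notMem hvB]
  omega

end SimpleGraph

/-- Every graph on `n ≥ 1` vertices has a `√n`-trap: a vertex `v` together with a set
`S` of at most `⌊√n⌋` cop positions, none equal to `v`, such that every neighbor of `v`
is controlled (equal or adjacent to a cop). -/
theorem stmt_6 {V : Type*} [Fintype V] (G : SimpleGraph V) (hn : 1 ≤ Fintype.card V) :
    ∃ v : V, ∃ S : Finset V, v ∉ S ∧ S.card ≤ ⌊Real.sqrt (Fintype.card V)⌋₊ ∧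
      ∀ u, G.Adj v u → ∃ s ∈ S, u = s ∨ G.Adj s u := by
  have : Nonempty V := Fintype.card_pos_iff.1 hn
  rw [Real.nat_floor_real_sqrt_eq_nat_sqrt]
  exact G.hasTrap_sqrt_card
end

section
/- In a strongly regular graph of girth 5, diameter 2, and degree d (a Moore graph on n = d²+1 vertices), for every vertex v and every set S of vertices with |S| ≤ d−1, some neighbor of v is not in the closed neighborhood of S\{v}; i.e., Moore graphs have no (√n − 1)-traps. -/
open SimpleGraph

private lemma cyc3' {V : Type*} (G : SimpleGraph V) {a b c : V}
    (hab : G.Adj a b) (hbc : G.Adj b c) (hca : G.Adj c a) :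
    ∃ (x : V) (w : G.Walk x x), w.IsCycle ∧ w.length = 3 := by
  have h1 := hab.ne; have h2 := hbc.ne; have h3 := hca.ne
  refine ⟨a, Walk.cons hab (Walk.cons hbc (Walk.cons hca Walk.nil)), ?_, rfl⟩
  rw [Walk.isCycle_def, Walk.isTrail_def]
  simp [Sym2.eq_iff]
  aesop

private lemma cyc4' {V : Type*} (G : SimpleGraph V) {a b c d : V}
    (hab : G.Adj a b) (hbc : G.Adj b c) (hcd : G.Adj c d) (hda : G.Adj d a)
    (hac : a ≠ c) (hbd : b ≠ d) :
    ∃ (x : V) (w : G.Walk x x), w.IsCycle ∧ w.length = 4 := by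
  have h1 := hab.ne; have h2 := hbc.ne; have h3 := hcd.ne; have h4 := hda.ne
  refine ⟨a, Walk.cons hab (Walk.cons hbc (Walk.cons hcd (Walk.cons hda Walk.nil))), ?_, rfl⟩
  rw [Walk.isCycle_def, Walk.isTrail_def]
  simp [Sym2.eq_iff]
  aesop

private lemma no_tri {V : Type*} {G : SimpleGraph V} (hg : G.egirth = 5) {a b c : V}
    (hab : G.Adj a b) (hbc : G.Adj b c) (hca : G.Adj c a) : False := by
  obtain ⟨x, w, hw, hlen⟩ := cyc3' G hab hbc hca
  have := (le_egirth.mp hg.ge) x w hw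
  rw [hlen] at this
  norm_num at this

private lemma no_quad {V : Type*} {G : SimpleGraph V} (hg : G.egirth = 5) {a b c d : V}
    (hab : G.Adj a b) (hbc : G.Adj b c) (hcd : G.Adj c d) (hda : G.Adj d a)
    (hac : a ≠ c) (hbd : b ≠ d) : False := by
  obtain ⟨x, w, hw, hlen⟩ := cyc4' G hab hbc hcd hda hac hbd
  have := (le_egirth.mp hg.ge) x w hw
  rw [hlen] at this
  norm_num at this

/-- Moore graphs (d-regular, girth 5, diameter 2, so `n = d² + 1`) have no
`(√n − 1)`-traps: for any vertex `v` and any placement of at most `d − 1` cops,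
some neighbor of `v` is not controlled by any cop placed away from `v`. -/
theorem stmt_7 {V : Type*} [Fintype V] (G : SimpleGraph V) [DecidableRel G.Adj] (d : ℕ)
    (hreg : ∀ v : V, G.degree v = d) (hgirth : G.egirth = 5)
    (hdiam : ∀ u v : V, u ≠ v → G.Adj u v ∨ ∃ w, G.Adj u w ∧ G.Adj w v)
    (hn : Fintype.card V = d ^ 2 + 1)
    (v : V) (S : Finset V) (hS : S.card ≤ d - 1) :
    ∃ u, G.Adj v u ∧ ∀ s ∈ S, s ≠ v → ¬(u = s ∨ G.Adj s u) := by
  classical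
  -- d ≥ 1 since the graph has a cycle (egirth = 5 ≠ ⊤).
  have hd1 : 1 ≤ d := by
    by_contra h
    push_neg at h
    interval_cases d
    have hacyc : G.IsAcyclic := by
      intro x w hw
      cases w with
      | nil => exact hw.ne_nil rfl
      | cons h' w' =>
        have : G.degree x = 0 := hreg x
        have := G.degree_pos_iff_exists_adj x |>.mpr ⟨_, h'⟩
        omega
    rw [hacyc.egirth_eq_top] at hgirth
    exact (by simp at hgirth)
  by_contra hcon
  push_neg at hcon
  -- every neighbor of v is covered by some cop in S \ {v}
  have hcov : ∀ u, G.Adj v u → ∃ s ∈ S, s ≠ v ∧ (u = s ∨ G.Adj s u) := by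
    intro u hu
    obtain ⟨s, hsS, hsv, hc⟩ := hcon u hu
    exact ⟨s, hsS, hsv, hc⟩
  have hch : ∀ u : V, ∃ s : V, G.Adj v u → s ∈ S ∧ s ≠ v ∧ (u = s ∨ G.Adj s u) := by
    intro u
    by_cases hu : G.Adj v u
    · obtain ⟨s, h1, h2, h3⟩ := hcov u hu
      exact ⟨s, fun _ => ⟨h1, h2, h3⟩⟩
    · exact ⟨v, fun h => absurd h hu⟩
  choose f hf using hch
  set N := G.neighborFinset v with hN
  set T := S.filter (· ≠ v) with hT
  have hmap : ∀ u ∈ N, f u ∈ T := by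
    intro u hu
    rw [mem_neighborFinset] at hu
    obtain ⟨h1, h2, _⟩ := hf u hu
    exact Finset.mem_filter.mpr ⟨h1, h2⟩
  have hinj : Set.InjOn f N := by
    intro u1 hu1 u2 hu2 heq
    rw [Finset.mem_coe, mem_neighborFinset] at hu1 hu2
    obtain ⟨_, hnv1, hc1⟩ := hf u1 hu1
    obtain ⟨_, hnv2, hc2⟩ := hf u2 hu2
    rw [heq] at hc1 hnv1
    by_contra hne
    rcases hc1 with h1 | h1 <;> rcases hc2 with h2 | h2
    · exact hne (h1.trans h2.symm)
    · rw [← h1] at h2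
      exact no_tri hgirth hu1 h2 hu2.symm
    · rw [← h2] at h1
      exact no_tri hgirth hu2 h1 hu1.symm
    · exact no_quad hgirth hu1 h1.symm h2 hu2.symm (fun h => hnv1 h.symm) hne
  have hcard : N.card ≤ T.card := Finset.card_le_card_of_injOn f hmap hinj
  have hNd : N.card = d := by
    rw [hN, G.card_neighborFinset_eq_degree, hreg v]
  have hTcard : T.card ≤ d - 1 := le_trans (Finset.card_filter_le S _) hS
  omega
end

section
/- For every finite simple graph G on n vertices, the teleporting cop number satisfies c_T(G) ≤ √n. -/
/-!
A vertex `r` of a vertex set `W` is a `k`-trap if `k` cops, none of them on `r`, control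
every vertex of `W` that a robber on `r` can reach. If every nonempty `W` has a `k`-trap,
`k` cops win: grow the set of winning robber positions from the complement of `W` by
deleting traps one at a time, since from a trap the robber must leave `W`.

With `s = ⌊√n⌋` we have `n ≤ s² + 2s`, and when `G` has no isolated vertex every
nonempty `W` with `|W| ≤ σ² + 2σ` has a `σ`-trap, by induction on `σ`. Let `r` have the
least degree `d` inside `W`. If `d ≤ σ`, the neighbours of `r` form the trap. If `d ≥ 2σ`,
a cop on `r` controls at least `2σ + 1` vertices, and the remaining `(σ - 1)² + 2(σ - 1)`
are handled by induction. Otherwise write `d = σ + 1 + x` and greedily pick disjoint pairs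
of neighbours of `r` sharing a controller other than `r`: either `x + 1` pairs exist and
`r` itself is a trap, or `σ + 1 - x` neighbours of `r` have closed neighbourhoods (of size
`> d`) meeting only in `r`; they control at least `(σ + 1 - x) d + 1` vertices, and the
remaining `(x - 1)² + 2(x - 1)` are handled by induction.

A robber on an isolated vertex is never caught, so then no number of cops wins and
`tCopNumber G = sInf ∅ = 0`.
-/

/-- `TCopsWinFrom G c r` : teleporting cops at `c`, robber at `r`, cops to move.
The cops may each jump to any vertex other than the robber's current vertex; the robber
then moves along an edge or stays, and loses if he ends in the closed neighborhood of a
cop; any robber move avoiding this must lead to a state that is again winning for the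
cops. -/
inductive TCopsWinFrom {V : Type*} (G : SimpleGraph V) {k : ℕ} : (Fin k → V) → V → Prop
  | step (c : Fin k → V) (r : V) (c' : Fin k → V)
      (hmove : ∀ i, c' i ≠ r)
      (h : ∀ r', (r' = r ∨ G.Adj r r') → ¬(∃ i, r' = c' i ∨ G.Adj (c' i) r') →
        TCopsWinFrom G c' r') :
      TCopsWinFrom G c r

/-- `k` teleporting cops have a winning strategy on `G`. -/
def TCopsWin {V : Type*} (G : SimpleGraph V) (k : ℕ) : Prop :=
  ∃ c₀ : Fin k → V, ∀ r₀ : V, TCopsWinFrom G c₀ r₀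

/-- The teleporting cop number of `G`. -/
noncomputable def tCopNumber {V : Type*} (G : SimpleGraph V) : ℕ :=
  sInf {k | TCopsWin G k}

open Finset

lemma Finset.card_mul_add_one_le_card_biUnion {ι α : Type*} [DecidableEq α] {I : Finset ι}
    {B : ι → Finset α} {r : α} {d : ℕ} (hI : I.Nonempty) (hr : ∀ i ∈ I, r ∈ B i)
    (hd : ∀ i ∈ I, d + 1 ≤ (B i).card)
    (hdisj : (I : Set ι).PairwiseDisjoint fun i => (B i).erase r) :
    I.card * d + 1 ≤ (I.biUnion B).card := by
  have hpetals : I.biUnion B = insert r (I.biUnion fun i => (B i).erase r) := by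
    ext a
    simp only [mem_biUnion, mem_insert, mem_erase]
    constructor
    · rintro ⟨i, hi, ha⟩
      by_cases har : a = r
      exacts [.inl har, .inr ⟨i, hi, har, ha⟩]
    · rintro (rfl | ⟨i, hi, -, ha⟩)
      · obtain ⟨i, hi⟩ := hI
        exact ⟨i, hi, hr i hi⟩
      · exact ⟨i, hi, ha⟩
  rw [hpetals, card_insert_of_notMem (by simp), card_biUnion hdisj, ← smul_eq_mul]
  gcongr
  refine card_nsmul_le_sum _ _ _ fun i hi => ?_
  rw [card_erase_of_mem (hr i hi)]
  have := hd i hi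
  omega

lemma Finset.exists_fin_range_eq {V : Type*} {S : Finset V} (hS : S.Nonempty) {k : ℕ}
    (hk : S.card ≤ k) : ∃ c : Fin k → V, Set.range c = S := by
  have : Nonempty S := hS.to_subtype
  have hinj : Function.Injective (Fin.castLE hk ∘ S.equivFin) :=
    (Fin.castLE_injective hk).comp S.equivFin.injective
  refine ⟨Subtype.val ∘ Function.invFun (Fin.castLE hk ∘ S.equivFin), ?_⟩
  rw [Set.range_comp, (Function.invFun_surjective hinj).range_eq, Set.image_univ,
    Subtype.range_coe]

namespace SimpleGraph

variable {V : Type*} {G : SimpleGraph V}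

variable (G) in
def Controls (w u : V) : Prop := u = w ∨ G.Adj w u

instance [DecidableEq V] [DecidableRel G.Adj] : DecidableRel G.Controls :=
  fun _ _ => inferInstanceAs (Decidable (_ ∨ _))

lemma Controls.refl (w : V) : G.Controls w w := Or.inl rfl

lemma Controls.symm {w u : V} (h : G.Controls w u) : G.Controls u w :=
  h.imp Eq.symm Adj.symm

lemma Adj.controls {w u : V} (h : G.Adj w u) : G.Controls w u := Or.inr h

variable (G) in
def IsTrap (W : Finset V) (k : ℕ) (r : V) : Prop :=
  r ∈ W ∧ ∃ S : Finset V, S.card ≤ k ∧ r ∉ S ∧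
    ∀ u ∈ W, G.Controls r u → ∃ w ∈ S, G.Controls w u

lemma card_filter_controls [DecidableEq V] [DecidableRel G.Adj] {W : Finset V} {v : V}
    (hv : v ∈ W) : {u ∈ W | G.Controls v u}.card = {u ∈ W | G.Adj v u}.card + 1 := by
  have : {u ∈ W | G.Controls v u} = insert v {u ∈ W | G.Adj v u} := by
    ext u
    rw [mem_filter, mem_insert, mem_filter]
    constructor
    · rintro ⟨hu, rfl | h⟩
      exacts [.inl rfl, .inr ⟨hu, h⟩]
    · rintro (rfl | ⟨hu, h⟩)
      exacts [⟨hv, .refl u⟩, ⟨hu, h.controls⟩]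
  rw [this, card_insert_of_notMem (by simp)]

lemma isTrap_of_card_filter_adj_le [DecidableRel G.Adj] {W : Finset V} {k : ℕ} {r : V}
    (hrW : r ∈ W) (hk : 1 ≤ k) (hr : ∃ a, G.Adj r a)
    (hdeg : {u ∈ W | G.Adj r u}.card ≤ k) :
    G.IsTrap W k r := by
  refine ⟨hrW, ?_⟩
  obtain hA | ⟨a, ha⟩ := {u ∈ W | G.Adj r u}.eq_empty_or_nonempty
  · obtain ⟨a, ha⟩ := hr
    refine ⟨{a}, by simpa using hk, by simpa using ha.ne, fun u hu hru =>
      ⟨a, mem_singleton_self a, ?_⟩⟩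
    obtain rfl | h := hru
    · exact ha.symm.controls
    · exact absurd (mem_filter.mpr ⟨hu, h⟩) (hA ▸ notMem_empty u)
  · refine ⟨_, hdeg, by simp, fun u hu hru => ?_⟩
    obtain rfl | h := hru
    · exact ⟨a, ha, (mem_filter.mp ha).2.symm.controls⟩
    · exact ⟨u, mem_filter.mpr ⟨hu, h⟩, .refl u⟩

lemma IsTrap.of_filter_not_controls [DecidableEq V] [DecidableRel G.Adj]
    {W C : Finset V} {k : ℕ} {r : V}
    (hr : G.IsTrap {u ∈ W | ¬∃ w ∈ C, G.Controls w u} k r) : G.IsTrap W (k + C.card) r := by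
  obtain ⟨hrW', S, hSk, hrS, hcov⟩ := hr
  obtain ⟨hrW, hrC⟩ := mem_filter.mp hrW'
  refine ⟨hrW, S ∪ C, (card_union_le S C).trans (by omega), ?_, fun u hu hru => ?_⟩
  · rw [mem_union, not_or]
    exact ⟨hrS, fun h => hrC ⟨r, h, .refl r⟩⟩
  by_cases huC : ∃ w ∈ C, G.Controls w u
  · obtain ⟨w, hw, hwu⟩ := huC
    exact ⟨w, mem_union_right S hw, hwu⟩
  · obtain ⟨w, hw, hwu⟩ := hcov u (mem_filter.mpr ⟨hu, huC⟩) hru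
    exact ⟨w, mem_union_left C hw, hwu⟩

lemma exists_isTrap_add_card [DecidableEq V] [DecidableRel G.Adj] {m : ℕ}
    (ih : ∀ W : Finset V, W.Nonempty → W.card ≤ m ^ 2 + 2 * m → ∃ r, G.IsTrap W m r)
    {W C : Finset V} {r₀ : V} (hr₀W : r₀ ∈ W) (hr₀C : r₀ ∉ C)
    (hcard : W.card ≤ {u ∈ W | ∃ w ∈ C, G.Controls w u}.card + (m ^ 2 + 2 * m)) :
    ∃ r, G.IsTrap W (m + C.card) r := by
  obtain hW' | hW' := {u ∈ W | ¬∃ w ∈ C, G.Controls w u}.eq_empty_or_nonempty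
  · refine ⟨r₀, hr₀W, C, by omega, hr₀C, fun u hu _ => ?_⟩
    by_contra h
    exact notMem_empty u (hW' ▸ mem_filter.mpr ⟨hu, h⟩)
  · have := card_filter_add_card_filter_not (s := W) fun u => ∃ w ∈ C, G.Controls w u
    obtain ⟨r, hr⟩ := ih _ hW' (by omega)
    exact ⟨r, hr.of_filter_not_controls⟩

lemma exists_controls_pairs_or_exists_pairwise [DecidableEq V] (X : Set V) (m : ℕ)
    (A : Finset V) :
    (∃ T E : Finset V, ↑T ⊆ X ∧ T.card ≤ m ∧ E ⊆ A ∧ E.card = 2 * m ∧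
      ∀ u ∈ E, ∃ w ∈ T, G.Controls w u) ∨
    ∃ I ⊆ A, A.card + 2 ≤ I.card + 2 * m ∧
      (I : Set V).Pairwise fun i j => ∀ w ∈ X, ¬(G.Controls w i ∧ G.Controls w j) := by
  induction m generalizing A with
  | zero => exact .inl ⟨∅, ∅, by simp, by simp, empty_subset A, by simp, by simp⟩
  | succ m ih =>
    by_cases hA : (A : Set V).Pairwise fun i j => ∀ w ∈ X, ¬(G.Controls w i ∧ G.Controls w j)
    · exact .inr ⟨A, subset_rfl, by omega, hA⟩
    simp only [Set.Pairwise, not_forall, not_not, mem_coe] at hA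
    obtain ⟨i, hi, j, hj, hij, w, hwX, hwi, hwj⟩ := hA
    have hjA : j ∈ A.erase i := mem_erase.mpr ⟨Ne.symm hij, hj⟩
    have hsub : (A.erase i).erase j ⊆ A := (erase_subset _ _).trans (erase_subset _ _)
    rcases ih ((A.erase i).erase j) with ⟨T, E, hTX, hT, hEA, hE, hTE⟩ | ⟨I, hIA, hI, hIpw⟩
    · have hiE : i ∉ insert j E := by
        rw [mem_insert, not_or]
        exact ⟨hij, fun h => by simpa using hEA h⟩
      have hjE : j ∉ E := fun h => by simpa using hEA h
      refine .inl ⟨insert w T, insert i (insert j E), ?_, (card_insert_le w T).trans (by omega),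
        insert_subset hi (insert_subset hj (hEA.trans hsub)), ?_, fun u hu => ?_⟩
      · rw [coe_insert]
        exact Set.insert_subset hwX hTX
      · rw [card_insert_of_notMem hiE, card_insert_of_notMem hjE]
        omega
      · rcases mem_insert.mp hu with rfl | hu
        · exact ⟨w, mem_insert_self w T, hwi⟩
        rcases mem_insert.mp hu with rfl | hu
        · exact ⟨w, mem_insert_self w T, hwj⟩
        obtain ⟨w', hw', hw'u⟩ := hTE u hu
        exact ⟨w', mem_insert_of_mem hw', hw'u⟩
    · refine .inr ⟨I, hIA.trans hsub, ?_, hIpw⟩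
      have := card_erase_of_mem hjA
      have := card_erase_of_mem hi
      omega

lemma isTrap_of_controls_subset_filter_adj [DecidableEq V] [DecidableRel G.Adj]
    {W T E : Finset V} {r : V} {k : ℕ} (hrW : r ∈ W) (hrT : r ∉ T)
    (hEA : E ⊆ {u ∈ W | G.Adj r u})
    (hTE : ∀ u ∈ E, ∃ w ∈ T, G.Controls w u) (hE : E.card < {u ∈ W | G.Adj r u}.card)
    (hk : T.card + {u ∈ W | G.Adj r u}.card ≤ k + E.card) : G.IsTrap W k r := by
  set A := {u ∈ W | G.Adj r u}
  have hAE : (A \ E).card = A.card - E.card := card_sdiff_of_subset hEA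
  refine ⟨hrW, T ∪ (A \ E), (card_union_le _ _).trans (by omega), ?_, fun u hu hru => ?_⟩
  · rw [mem_union, not_or, mem_sdiff]
    exact ⟨hrT, fun h => G.irrefl (mem_filter.mp h.1).2⟩
  obtain rfl | hadj := hru
  · obtain ⟨a, ha⟩ : (A \ E).Nonempty := card_pos.mp (by omega)
    exact ⟨a, mem_union_right T ha, (mem_filter.mp (mem_sdiff.mp ha).1).2.symm.controls⟩
  by_cases huE : u ∈ E
  · obtain ⟨w, hw, hwu⟩ := hTE u huE
    exact ⟨w, mem_union_left _ hw, hwu⟩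
  · refine ⟨u, mem_union_right T ?_, .refl u⟩
    exact mem_sdiff.mpr ⟨mem_filter.mpr ⟨hu, hadj⟩, huE⟩

lemma exists_isTrap_of_lt_card_filter_adj_lt [DecidableEq V] [DecidableRel G.Adj] {σ : ℕ}
    (ih : ∀ m < σ, ∀ W : Finset V, W.Nonempty → W.card ≤ m ^ 2 + 2 * m →
      ∃ r, G.IsTrap W m r)
    {W : Finset V} (hW : W.card ≤ σ ^ 2 + 2 * σ) {r : V} (hrW : r ∈ W)
    (hmin : ∀ v ∈ W, {u ∈ W | G.Adj r u}.card ≤ {u ∈ W | G.Adj v u}.card)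
    (hlow : σ < {u ∈ W | G.Adj r u}.card) (hhigh : {u ∈ W | G.Adj r u}.card < 2 * σ) :
    ∃ v, G.IsTrap W σ v := by
  set A := {u ∈ W | G.Adj r u}
  obtain ⟨x, hx⟩ : ∃ x, A.card = σ + 1 + x := ⟨A.card - (σ + 1), by omega⟩
  have hAcard : {u ∈ W | G.Adj r u}.card = A.card := rfl
  rcases G.exists_controls_pairs_or_exists_pairwise {r}ᶜ (x + 1) A with
    ⟨T, E, hTX, hT, hEA, hE, hTE⟩ | ⟨I, hIA, hI, hIpw⟩
  · exact ⟨r, isTrap_of_controls_subset_filter_adj hrW (fun h => hTX h rfl) hEA hTE (by omega)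
      (by omega)⟩
  obtain ⟨a, ha⟩ : ∃ a, σ + 1 = x + a := ⟨σ + 1 - x, by omega⟩
  obtain ⟨I₀, hI₀I, hI₀⟩ := I.exists_subset_card_eq (show a ≤ I.card by omega)
  have hI₀A : I₀ ⊆ A := hI₀I.trans hIA
  have hadj : ∀ i ∈ I₀, G.Adj r i := fun i hi => (mem_filter.mp (hI₀A hi)).2
  have hcontrolled : {u ∈ W | ∃ w ∈ I₀, G.Controls w u} =
      I₀.biUnion fun i => {u ∈ W | G.Controls i u} := by
    ext u
    simp only [mem_filter, mem_biUnion]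
    constructor
    · rintro ⟨hu, i, hi, hiu⟩
      exact ⟨i, hi, hu, hiu⟩
    · rintro ⟨i, hi, hu, hiu⟩
      exact ⟨hu, i, hi, hiu⟩
  have hsunflower : a * A.card + 1 ≤ {u ∈ W | ∃ w ∈ I₀, G.Controls w u}.card := by
    rw [hcontrolled, ← hI₀]
    refine card_mul_add_one_le_card_biUnion (card_pos.mp (by omega))
      (fun i hi => mem_filter.mpr ⟨hrW, (hadj i hi).symm.controls⟩)
      (fun i hi => ?_) fun i hi j hj hij => ?_
    · rw [card_filter_controls (mem_filter.mp (hI₀A hi)).1]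
      exact Nat.add_le_add_right (hmin i (mem_filter.mp (hI₀A hi)).1) 1
    · rw [Function.onFun, Finset.disjoint_left]
      intro z hzi hzj
      obtain ⟨hzr, hzi⟩ := mem_erase.mp hzi
      obtain ⟨hzr', hzj⟩ := mem_erase.mp hzj
      exact hIpw (hI₀I hi) (hI₀I hj) hij z hzr
        ⟨(mem_filter.mp hzi).2.symm, (mem_filter.mp hzj).2.symm⟩
  have hctrl_le : {u ∈ W | ∃ w ∈ I₀, G.Controls w u}.card ≤ W.card := card_filter_le _ _
  have hsq : σ ^ 2 + 2 * σ + 1 = (x + a) ^ 2 := by rw [← ha]; ring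
  obtain ⟨y, rfl⟩ : ∃ y, x = y + 1 := by
    refine Nat.exists_eq_add_one.mpr (Nat.pos_of_ne_zero fun hx0 => ?_)
    subst hx0
    nlinarith
  have hrI₀ : r ∉ I₀ := fun h => G.irrefl (hadj r h)
  have := exists_isTrap_add_card (ih y (by omega)) hrW hrI₀ (by nlinarith)
  rwa [hI₀, show y + a = σ by omega] at this

lemma exists_isTrap_of_two_mul_le_card_filter_adj [DecidableEq V] [DecidableRel G.Adj]
    {σ : ℕ}
    (ih : ∀ W : Finset V, W.Nonempty → W.card ≤ σ ^ 2 + 2 * σ → ∃ r, G.IsTrap W σ r)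
    {W : Finset V} (hW : W.card ≤ (σ + 1) ^ 2 + 2 * (σ + 1)) {r : V} (hrW : r ∈ W)
    (hdeg : 2 * (σ + 1) ≤ {u ∈ W | G.Adj r u}.card) : ∃ v, G.IsTrap W (σ + 1) v := by
  obtain ⟨a, ha⟩ : {u ∈ W | G.Adj r u}.Nonempty := card_pos.mp (by omega)
  have hctrl : {u ∈ W | ∃ w ∈ ({r} : Finset V), G.Controls w u}.card =
      {u ∈ W | G.Adj r u}.card + 1 := by
    simpa using card_filter_controls hrW
  have haW : a ∈ W := (mem_filter.mp ha).1
  have har : a ∉ ({r} : Finset V) := by simpa using (mem_filter.mp ha).2.ne'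
  simpa using exists_isTrap_add_card ih haW har (by rw [hctrl]; nlinarith)

theorem exists_isTrap [DecidableEq V] [DecidableRel G.Adj] (hG : ∀ v, ∃ u, G.Adj v u)
    (σ : ℕ) :
    ∀ W : Finset V, W.Nonempty → W.card ≤ σ ^ 2 + 2 * σ → ∃ r, G.IsTrap W σ r := by
  induction σ using Nat.strong_induction_on with
  | _ σ ih =>
  intro W hW hcard
  obtain ⟨r, hrW, hmin⟩ := W.exists_min_image (fun v => {u ∈ W | G.Adj v u}.card) hW
  obtain _ | σ := σ
  · simp [hW.ne_empty] at hcard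
  rcases le_or_gt {u ∈ W | G.Adj r u}.card (σ + 1) with hle | hlt
  · exact ⟨r, isTrap_of_card_filter_adj_le hrW (by omega) (hG r) hle⟩
  rcases lt_or_ge {u ∈ W | G.Adj r u}.card (2 * (σ + 1)) with hmid | hbig
  · exact exists_isTrap_of_lt_card_filter_adj_lt ih hcard hrW hmin hlt hmid
  · exact exists_isTrap_of_two_mul_le_card_filter_adj (ih σ (by omega)) hcard hrW hbig

lemma IsTrap.tCopsWinFrom {W : Finset V} {k : ℕ} {r : V} (hr : G.IsTrap W k r)
    (hout : ∀ v ∉ W, ∀ c : Fin k → V, TCopsWinFrom G c v) (c : Fin k → V) :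
    TCopsWinFrom G c r := by
  obtain ⟨hrW, S, hSk, hrS, hcov⟩ := hr
  obtain ⟨w, hwS, -⟩ := hcov r hrW (.refl r)
  obtain ⟨c', hc'⟩ := exists_fin_range_eq ⟨w, hwS⟩ hSk
  have hc'S : ∀ i, c' i ∈ S := fun i => by
    rw [← mem_coe, ← hc']
    exact Set.mem_range_self i
  refine .step c r c' (fun i h => hrS (h ▸ hc'S i)) fun r' hmove hesc => hout r' ?_ c'
  intro hr'W
  obtain ⟨w, hwS, hw⟩ := hcov r' hr'W hmove
  obtain ⟨i, rfl⟩ : w ∈ Set.range c' := hc' ▸ hwS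
  exact hesc ⟨i, hw⟩

end SimpleGraph

open SimpleGraph

section

variable {V : Type*} {G : SimpleGraph V}

theorem tCopsWinFrom_of_exists_isTrap [Fintype V] {k : ℕ}
    (htrap : ∀ W : Finset V, W.Nonempty → ∃ r, G.IsTrap W k r) (c : Fin k → V) (r : V) :
    TCopsWinFrom G c r := by
  classical
  suffices ∀ W : Finset V, (∀ v ∉ W, ∀ c : Fin k → V, TCopsWinFrom G c v) →
      ∀ v (c : Fin k → V), TCopsWinFrom G c v from
    this univ (fun v hv => absurd (mem_univ v) hv) r c
  intro W
  induction W using Finset.strongInduction with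
  | _ W ih =>
  intro hout
  obtain rfl | hW := W.eq_empty_or_nonempty
  · exact fun v => hout v (notMem_empty v)
  obtain ⟨r, hr⟩ := htrap W hW
  refine ih (W.erase r) (erase_ssubset hr.1) fun v hv => ?_
  by_cases hvr : v = r
  · exact hvr ▸ hr.tCopsWinFrom hout
  · exact hout v fun hvW => hv (mem_erase.mpr ⟨hvr, hvW⟩)

lemma TCopsWinFrom.ne_of_forall_not_adj {k : ℕ} {w : V} (hw : ∀ u, ¬G.Adj w u)
    {c : Fin k → V} {r : V} (h : TCopsWinFrom G c r) : r ≠ w := by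
  induction h with
  | step c r c' hmove _ ih =>
    rintro rfl
    refine ih r (Or.inl rfl) ?_ rfl
    rintro ⟨i, hi | hi⟩
    · exact hmove i hi.symm
    · exact hw (c' i) hi.symm

lemma tCopNumber_eq_zero_of_forall_not_adj {w : V} (hw : ∀ u, ¬G.Adj w u) :
    tCopNumber G = 0 :=
  Nat.sInf_eq_zero.mpr <| .inr <| Set.eq_empty_of_forall_notMem fun _ ⟨_, hc₀⟩ =>
    (hc₀ w).ne_of_forall_not_adj hw rfl

end

/-- For every graph `G` on `n` vertices, the teleporting cop number is at most `√n`. -/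
theorem stmt_12 {V : Type*} [Fintype V] (G : SimpleGraph V) :
    (tCopNumber G : ℝ) ≤ Real.sqrt (Fintype.card V) := by
  classical
  set s := Nat.sqrt (Fintype.card V)
  refine le_trans (Nat.cast_le.mpr ?_) Real.nat_sqrt_le_real_sqrt
  by_cases hiso : ∃ w, ∀ u, ¬G.Adj w u
  · obtain ⟨w, hw⟩ := hiso
    simp [tCopNumber_eq_zero_of_forall_not_adj hw]
  have hG : ∀ v, ∃ u, G.Adj v u := by simpa using hiso
  have hcard : Fintype.card V ≤ s ^ 2 + 2 * s := by
    have := Nat.sqrt_le_add (Fintype.card V)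
    nlinarith
  have hwin := tCopsWinFrom_of_exists_isTrap fun W hW =>
    exists_isTrap hG s W hW ((card_le_univ W).trans hcard)
  obtain ⟨c₀⟩ : Nonempty (Fin s → V) := by
    rcases isEmpty_or_nonempty V with hV | hV
    · exact ⟨fun i => absurd i.2 (by simp [s])⟩
    · infer_instance
  exact Nat.sInf_le ⟨c₀, hwin c₀⟩
end

section
/- Let G be a graph and suppose vertex u is an (α−1)-trap in the induced subgraph G − {v} for some vertex v ≠ u which is a √n-trap in G. Then u is an α-trap in G, for any real α ≥ 1. -/
/-- `w` is an `s`-trap in the graph `H`: at most `⌊s⌋` cops can be placed away from `w`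
so that every neighbor of `w` is in the closed neighborhood of some cop. -/
def IsTrap {α : Type*} (H : SimpleGraph α) (s : ℝ) (w : α) : Prop :=
  ∃ S : Finset α, w ∉ S ∧ S.card ≤ ⌊s⌋₊ ∧ ∀ u, H.Adj w u → ∃ c ∈ S, u = c ∨ H.Adj c u

/-! A cop placed on `v` itself guards the only neighbour of `u` that `G - {v}` does not see,
so one extra cop turns an `(α - 1)`-trap of `G - {v}` into an `α`-trap of `G`. -/

open Finset

namespace IsTrap

variable {V : Type*} {G : SimpleGraph V} {s : ℝ} {v w : V}

theorem of_induce_ne (hwv : w ≠ v) (hs : 0 ≤ s)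
    (h : IsTrap (G.induce {x | x ≠ v}) s ⟨w, hwv⟩) : IsTrap G (s + 1) w := by
  classical
  obtain ⟨S, hwS, hcard, hcover⟩ := h
  refine ⟨insert v (S.map (Function.Embedding.subtype _)), ?_, ?_, ?_⟩
  · simpa [hwv] using hwS
  · calc #(insert v (S.map (Function.Embedding.subtype _)))
        ≤ #(S.map (Function.Embedding.subtype _)) + 1 := card_insert_le _ _
      _ = #S + 1 := by rw [card_map]
      _ ≤ ⌊s⌋₊ + 1 := Nat.add_le_add_right hcard 1
      _ = ⌊s + 1⌋₊ := (Nat.floor_add_one hs).symm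
  · intro x hx
    by_cases hxv : x = v
    · exact ⟨v, mem_insert_self _ _, .inl hxv⟩
    obtain ⟨c, hcS, hc⟩ := hcover ⟨x, hxv⟩ hx
    exact ⟨c, mem_insert_of_mem (mem_map_of_mem _ hcS), hc.imp (congrArg Subtype.val) id⟩

end IsTrap

theorem stmt_16_general {V : Type*} (G : SimpleGraph V) (α : ℝ) (hα : 1 ≤ α)
    (v u : V) (hvu : v ≠ u)
    (hu : IsTrap (G.induce {x : V | x ≠ v}) (α - 1) ⟨u, hvu.symm⟩) :
    IsTrap G α u := by
  simpa using hu.of_induce_ne hvu.symm (sub_nonneg.2 hα)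

/-- If `u` is an `(α−1)`-trap in `G − {v}`, where `v ≠ u` is a `√n`-trap in `G`, then
`u` is an `α`-trap in `G`, for any real `α ≥ 1`. -/
theorem stmt_16 {V : Type*} [Fintype V] (G : SimpleGraph V) (α : ℝ) (hα : 1 ≤ α)
    (v u : V) (hvu : v ≠ u)
    (hv : IsTrap G (Real.sqrt (Fintype.card V)) v)
    (hu : IsTrap (G.induce {x : V | x ≠ v}) (α - 1) ⟨u, hvu.symm⟩) :
    IsTrap G α u :=
  stmt_16_general G α hα v u hvu hu
end
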